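/- arXiv:1812.09098 — 3 statements merged into one kernel-verified Lean document; each statement's English description precedes it below -/
import Mathlib

section
/- For any integers m ≥ i ≥ 0, the limit as q → -1 of the Gaussian binomial coefficient [2m choose 2i]_q equals the ordinary binomial coefficient C(m, i). -/
open Finset

/-- A permutation of `Fin n` viewed as a function `ℕ → ℕ` (0-based), identity outside. -/
def pf {n : ℕ} (π : Equiv.Perm (Fin n)) (i : ℕ) : ℕ :=
  if h : i < n then (π ⟨i, h⟩ : ℕ) else i

/-- Number of descents. -/
def desN {n : ℕ} (π : Equiv.Perm (Fin n)) : ℕ :=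
  ((range (n - 1)).filter (fun i => pf π (i + 1) < pf π i)).card

/-- Number of inversions. -/
def invN {n : ℕ} (π : Equiv.Perm (Fin n)) : ℕ :=
  (((range n) ×ˢ (range n)).filter (fun p => p.1 < p.2 ∧ pf π p.2 < pf π p.1)).card

/-- Number of excedances. -/
def excN {n : ℕ} (π : Equiv.Perm (Fin n)) : ℕ :=
  ((range n).filter (fun i => i < pf π i)).card

/-- Major index. -/
def majN {n : ℕ} (π : Equiv.Perm (Fin n)) : ℕ :=
  ∑ i ∈ (range (n - 1)).filter (fun i => pf π (i + 1) < pf π i), (i + 1)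

/-- Number of admissible inversions. -/
def aiN {n : ℕ} (π : Equiv.Perm (Fin n)) : ℕ :=
  (((range n) ×ˢ (range n)).filter (fun p => p.1 < p.2 ∧ pf π p.2 < pf π p.1 ∧
    ((0 < p.1 ∧ pf π (p.1 - 1) < pf π p.1) ∨ ∃ k < p.2, p.1 < k ∧ pf π p.1 < pf π k))).card

/-- The classical Eulerian polynomial `A_n(t) = ∑_{π ∈ S_n} t^{des π}`. -/
def eulerPoly (R : Type*) [CommRing R] (n : ℕ) (t : R) : R :=
  ∑ π : Equiv.Perm (Fin n), t ^ desN π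

/-- The (maj, exc) q-Eulerian polynomial `A_n(t,q)`. -/
def Aq (R : Type*) [CommRing R] (n : ℕ) (t q : R) : R :=
  ∑ π : Equiv.Perm (Fin n), t ^ excN π * q ^ (majN π - excN π)

/-- The Gaussian binomial coefficient (as a value at `q`), via the q-Pascal recurrence. -/
def gaussR {R : Type*} [CommRing R] (q : R) : ℕ → ℕ → R
  | _, 0 => 1
  | 0, _ + 1 => 0
  | n + 1, k + 1 => gaussR q n k + q ^ (k + 1) * gaussR q n (k + 1)

/-- The q-binomial-Eulerian polynomial `Ã_n(t,q)`. -/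
def Atilde (R : Type*) [CommRing R] (n : ℕ) (t q : R) : R :=
  1 + t * ∑ m ∈ Icc 1 n, gaussR q n m * Aq R m t q

/-- Membership in PRW: if the permutation has an ascent, then the first ascent
carries the smallest letter. -/
def isPRW {n : ℕ} (π : Equiv.Perm (Fin n)) : Prop :=
  ∀ i < n, i + 1 < n → pf π i < pf π (i + 1) →
    (∀ j < i, ¬ pf π j < pf π (j + 1)) → pf π i = 0

instance {n : ℕ} : DecidablePred (isPRW (n := n)) := fun _ => by
  unfold isPRW; infer_instance

/-- 1-based entries with boundary convention `σ₀ = σ_{n+1} = +∞` (encoded as `n`). -/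
def extv {n : ℕ} (π : Equiv.Perm (Fin n)) (i : ℕ) : ℕ :=
  if 1 ≤ i ∧ i ≤ n then pf π (i - 1) else n

/-- Number of non-initial double descents. -/
def ddN {n : ℕ} (π : Equiv.Perm (Fin n)) : ℕ :=
  ((Icc 2 n).filter (fun i => extv π (i + 1) < extv π i ∧ extv π i < extv π (i - 1))).card
/-!
At `q = -1` the q-Pascal recurrence `[n+1, k+1] = [n, k] + q^(k+1) [n, k+1]` collapses, by
parity, to Pascal's rule for `C(⌊n/2⌋, ⌊k/2⌋)`, so `[2m, 2i]_{-1} = C(m, i)`. The Gaussian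
binomial is a polynomial in `q`, hence continuous, and away from `q = ±1` it agrees with the
quotient of q-factorials, which gives the limit.
-/

open Topology

/-- The q-Pochhammer symbol `(q;q)_n`. -/
def qFactorial {R : Type*} [CommRing R] (q : R) (n : ℕ) : R :=
  ∏ j ∈ range n, (1 - q ^ (j + 1))

section gaussR

variable {R : Type*} [CommRing R]

@[simp]
lemma gaussR_zero_right (q : R) (n : ℕ) : gaussR q n 0 = 1 := by cases n <;> rfl

lemma gaussR_succ_succ (q : R) (n k : ℕ) :
    gaussR q (n + 1) (k + 1) = gaussR q n k + q ^ (k + 1) * gaussR q n (k + 1) := rfl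

lemma gaussR_of_lt (q : R) {n k : ℕ} (hnk : n < k) : gaussR q n k = 0 := by
  induction n generalizing k with
  | zero => obtain ⟨k, rfl⟩ := Nat.exists_eq_succ_of_ne_zero hnk.ne'; rfl
  | succ n ih =>
    obtain ⟨k, rfl⟩ := Nat.exists_eq_succ_of_ne_zero (Nat.ne_zero_of_lt hnk)
    rw [gaussR_succ_succ, ih (by omega), ih (by omega), zero_add, mul_zero]

@[simp]
lemma gaussR_self (q : R) (n : ℕ) : gaussR q n n = 1 := by
  induction n with
  | zero => rfl
  | succ n ih => rw [gaussR_succ_succ, ih, gaussR_of_lt q n.lt_succ_self, mul_zero, add_zero]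

lemma continuous_gaussR [TopologicalSpace R] [IsTopologicalRing R] (n k : ℕ) :
    Continuous fun q : R => gaussR q n k := by
  induction n generalizing k with
  | zero => cases k <;> exact continuous_const
  | succ n ih =>
    cases k with
    | zero => exact continuous_const
    | succ k => exact (ih k).add ((continuous_pow (k + 1)).mul (ih (k + 1)))

lemma qFactorial_mul_qFactorial_mul_gaussR (q : R) {n k : ℕ} (hkn : k ≤ n) :
    qFactorial q k * qFactorial q (n - k) * gaussR q n k = qFactorial q n := by
  induction n generalizing k with
  | zero => simp [Nat.le_zero.mp hkn, qFactorial]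
  | succ n ih =>
    rcases k with _ | k
    · simp [qFactorial]
    rcases hkn.eq_or_lt with heq | hlt
    · obtain rfl : k = n := by omega
      simp [qFactorial]
    obtain ⟨d, hd⟩ : ∃ d, n - k = d + 1 := ⟨n - (k + 1), by omega⟩
    have hd' : n - (k + 1) = d := by omega
    have hpow : q ^ (k + 1) * q ^ (d + 1) = q ^ (n + 1) := by
      rw [← pow_add]; congr 1; omega
    have h₁ := ih (k := k) (by omega)
    have h₂ := ih (k := k + 1) (by omega)
    simp only [qFactorial, Nat.add_sub_add_right, hd, hd', prod_range_succ] at h₁ h₂ ⊢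
    rw [gaussR_succ_succ]
    linear_combination (1 - q ^ (k + 1)) * h₁ + q ^ (k + 1) * (1 - q ^ (d + 1)) * h₂ -
      (∏ j ∈ range n, (1 - q ^ (j + 1))) * hpow

lemma gaussR_neg_one (n k : ℕ) :
    gaussR (-1 : R) n k = if Even n ∧ Odd k then 0 else ((n / 2).choose (k / 2) : R) := by
  induction n generalizing k with
  | zero =>
    rcases Nat.even_or_odd' k with ⟨b, rfl | rfl⟩ <;> rcases b with _ | b <;>
      simp [gaussR, parity_simps, mul_add]
  | succ n ih =>
    rcases k with _ | k
    · simp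
    rw [gaussR_succ_succ, ih, ih]
    rcases Nat.even_or_odd' n with ⟨a, rfl | rfl⟩ <;> rcases Nat.even_or_odd' k with ⟨b, rfl | rfl⟩
    all_goals simp [parity_simps, pow_succ, Nat.mul_add_div, add_assoc, Nat.add_div_right,
      Nat.choose_succ_succ']

end gaussR

lemma qFactorial_ne_zero {R : Type*} [CommRing R] [LinearOrder R] [IsStrictOrderedRing R]
    {q : R} (hq₁ : q ≠ 1) (hq₂ : q ≠ -1) (n : ℕ) : qFactorial q n ≠ 0 := by
  refine prod_ne_zero_iff.mpr fun j _ h => ?_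
  rcases pow_eq_one_iff_cases.mp (sub_eq_zero.mp h).symm with h | h | h
  exacts [j.succ_ne_zero h, hq₁ h, hq₂ h.1]

lemma tendsto_qFactorial_div (q₀ : ℝ) {n k : ℕ} (hkn : k ≤ n) :
    Filter.Tendsto (fun q : ℝ => qFactorial q n / (qFactorial q k * qFactorial q (n - k)))
      (𝓝[≠] q₀) (𝓝 (gaussR q₀ n k)) := by
  have hcofinite : ({1, -1} : Set ℝ)ᶜ ∈ 𝓝[≠] q₀ :=
    nhdsNE_le_cofinite q₀ (Filter.mem_cofinite.mpr (by simp))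
  refine ((continuous_gaussR n k).tendsto q₀).mono_left nhdsWithin_le_nhds |>.congr' ?_
  filter_upwards [hcofinite] with q hq
  simp only [Set.mem_compl_iff, Set.mem_insert_iff, Set.mem_singleton_iff, not_or] at hq
  rw [eq_div_iff (mul_ne_zero (qFactorial_ne_zero hq.1 hq.2 _) (qFactorial_ne_zero hq.1 hq.2 _)),
    mul_comm, qFactorial_mul_qFactorial_mul_gaussR q hkn]

/-- limit as q → -1 of [2m choose 2i]_q (defined as the ratio
`(q;q)_{2m} / ((q;q)_{2i} (q;q)_{2m-2i})`) equals C(m,i). -/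
theorem stmt0 (m i : ℕ) (h : i ≤ m) :
    Filter.Tendsto (fun q : ℝ =>
      (∏ j ∈ range (2 * m), (1 - q ^ (j + 1))) /
        ((∏ j ∈ range (2 * i), (1 - q ^ (j + 1))) *
          (∏ j ∈ range (2 * m - 2 * i), (1 - q ^ (j + 1)))))
      (nhdsWithin (-1) {(-1)}ᶜ) (nhds (m.choose i : ℝ)) := by
  have hval : gaussR (-1 : ℝ) (2 * m) (2 * i) = m.choose i := by
    simp [gaussR_neg_one]
  rw [← hval]
  exact tendsto_qFactorial_div (-1) (by omega)
end

section
/- For all n ≥ 1, the signed descent-inversion Eulerian polynomial ∑_{π ∈ S_n} t^{des(π)} (-1)^{inv(π)} equals (1-t)^m A_m(t) if n = 2m and equals (1-t)^m A_{m+1}(t) if n = 2m+1, where A_k(t) = ∑_{σ ∈ S_k} t^{des(σ)} is the k-th Eulerian polynomial. -/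
open Finset

/-! ### Auxiliary machinery for stmt3 -/

section DFLaux

variable {n : ℕ}

/-- Position of a value: inverse of `pf`. -/
def posf (π : Equiv.Perm (Fin n)) (v : ℕ) : ℕ :=
  if h : v < n then (π.symm ⟨v, h⟩ : ℕ) else v

lemma pf_eq (π : Equiv.Perm (Fin n)) {i : ℕ} (h : i < n) : pf π i = π ⟨i, h⟩ := dif_pos h

lemma posf_eq (π : Equiv.Perm (Fin n)) {v : ℕ} (h : v < n) : posf π v = π.symm ⟨v, h⟩ :=
  dif_pos h

lemma pf_lt (π : Equiv.Perm (Fin n)) {i : ℕ} (hi : i < n) : pf π i < n := by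
  rw [pf_eq π hi]; exact (π ⟨i, hi⟩).isLt

lemma posf_lt (π : Equiv.Perm (Fin n)) {v : ℕ} (hv : v < n) : posf π v < n := by
  rw [posf_eq π hv]; exact (π.symm ⟨v, hv⟩).isLt

lemma pf_posf (π : Equiv.Perm (Fin n)) {v : ℕ} (hv : v < n) : pf π (posf π v) = v := by
  rw [posf_eq π hv, pf_eq π (π.symm ⟨v, hv⟩).isLt]
  simp

lemma posf_pf (π : Equiv.Perm (Fin n)) {i : ℕ} (hi : i < n) : posf π (pf π i) = i := by
  rw [pf_eq π hi, posf_eq π (π ⟨i, hi⟩).isLt]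
  simp

lemma pf_inj (π : Equiv.Perm (Fin n)) {i j : ℕ} (hi : i < n) (hj : j < n)
    (h : pf π i = pf π j) : i = j := by
  have h1 := posf_pf π hi
  have h2 := posf_pf π hj
  rw [h] at h1
  omega

/-- The function on values swapping `v` and `v+1`. -/
def sf (v y : ℕ) : ℕ := if y = v then v + 1 else if y = v + 1 then v else y

lemma sf_lt_sf {v y z : ℕ} (h1 : ¬(y = v ∧ z = v + 1)) (h2 : ¬(y = v + 1 ∧ z = v)) :
    (sf v z < sf v y ↔ z < y) := by
  unfold sf; split_ifs <;> omega

lemma pf_swap_mul {v : ℕ} (h1 : v < n) (h2 : v + 1 < n) (π : Equiv.Perm (Fin n)) (i : ℕ) :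
    pf (Equiv.swap ⟨v, h1⟩ ⟨v + 1, h2⟩ * π) i = sf v (pf π i) := by
  by_cases hi : i < n
  · rw [pf_eq _ hi, pf_eq _ hi]
    rw [Equiv.Perm.mul_apply, Equiv.swap_apply_def]
    simp only [sf]
    split_ifs with ha hb hc hd he hf <;>
      simp_all [Fin.ext_iff] <;> omega
  · rw [pf, dif_neg hi, pf, dif_neg hi, sf]
    have : ¬ i = v := by omega
    have : ¬ i = v + 1 := by omega
    simp_all

lemma posf_swap_mul {v : ℕ} (h1 : v < n) (h2 : v + 1 < n) (π : Equiv.Perm (Fin n)) (w : ℕ) :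
    posf (Equiv.swap ⟨v, h1⟩ ⟨v + 1, h2⟩ * π) w = posf π (sf v w) := by
  by_cases hw : w < n
  · have hsf : sf v w < n := by unfold sf; split_ifs <;> omega
    rw [posf_eq _ hw, posf_eq _ hsf]
    have : (Equiv.swap (⟨v, h1⟩ : Fin n) ⟨v + 1, h2⟩ * π).symm
        = π.symm * Equiv.swap ⟨v, h1⟩ ⟨v + 1, h2⟩ := by
      rw [Equiv.Perm.mul_def]
      rfl
    rw [this, Equiv.Perm.mul_apply]
    congr 1
    rw [Equiv.swap_apply_def]
    split_ifs with ha hb <;> simp_all [Fin.ext_iff, sf] <;> omega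
  · have : ¬ sf v w < n := by unfold sf; split_ifs <;> omega
    rw [posf, dif_neg hw, posf, dif_neg this, sf]
    have : ¬ w = v := by omega
    have : ¬ w = v + 1 := by omega
    simp_all

/-- Generic toggle lemma: if two finsets agree off `e` and disagree at `e`,
their cards differ by one. -/
lemma card_toggle {α : Type*} [DecidableEq α] {s t : Finset α} {e : α}
    (h1 : ∀ x, x ≠ e → (x ∈ s ↔ x ∈ t)) (h2 : e ∈ s ↔ e ∉ t) :
    s.card = t.card + 1 ∨ t.card = s.card + 1 := by
  by_cases he : e ∈ s
  · left
    have ht : t = s.erase e := by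
      ext x
      by_cases hx : x = e
      · subst hx; simp [h2.mp he]
      · simp [Finset.mem_erase, hx, (h1 x hx).symm]
    rw [ht, Finset.card_erase_of_mem he]
    have := Finset.card_pos.mpr ⟨e, he⟩
    omega
  · right
    have ht : s = t.erase e := by
      ext x
      by_cases hx : x = e
      · subst hx; simp [he]
      · simp [Finset.mem_erase, hx, h1 x hx]
    have het : e ∈ t := by by_contra h; exact he (h2.mpr h)
    rw [ht, Finset.card_erase_of_mem het]
    have := Finset.card_pos.mpr ⟨e, het⟩
    omega

section SwapLemmas

variable {n : ℕ} {v : ℕ} (h1 : v < n) (h2 : v + 1 < n) (π : Equiv.Perm (Fin n))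

/-- Separation hypothesis: the positions of `v` and `v+1` are not adjacent. -/
def sep (π : Equiv.Perm (Fin n)) (v : ℕ) : Prop :=
  posf π v + 1 ≠ posf π (v + 1) ∧ posf π (v + 1) + 1 ≠ posf π v

lemma desN_swap_mul (hsep : sep π v) :
    desN (Equiv.swap ⟨v, h1⟩ ⟨v + 1, h2⟩ * π) = desN π := by
  unfold desN
  congr 1
  apply Finset.filter_congr
  intro i hi
  rw [Finset.mem_range] at hi
  rw [pf_swap_mul h1 h2, pf_swap_mul h1 h2]
  apply sf_lt_sf
  · rintro ⟨ha, hb⟩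
    have hp : posf π v = i := ha ▸ posf_pf π (by omega)
    have hq : posf π (v + 1) = i + 1 := hb ▸ posf_pf π (by omega)
    exact hsep.1 (by omega)
  · rintro ⟨ha, hb⟩
    have hp : posf π (v + 1) = i := ha ▸ posf_pf π (by omega)
    have hq : posf π v = i + 1 := hb ▸ posf_pf π (by omega)
    exact hsep.2 (by omega)

lemma invN_swap_mul (hsep : sep π v) :
    invN (Equiv.swap ⟨v, h1⟩ ⟨v + 1, h2⟩ * π) = invN π + 1 ∨
      invN π = invN (Equiv.swap ⟨v, h1⟩ ⟨v + 1, h2⟩ * π) + 1 := by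
  set p := posf π v with hp
  set q := posf π (v + 1) with hq
  have hpn : p < n := posf_lt π (by omega)
  have hqn : q < n := posf_lt π (by omega)
  have hpq : p ≠ q := by
    intro h
    have := pf_posf π (show v < n by omega)
    have h2' := pf_posf π (show v + 1 < n by omega)
    rw [← hp] at this; rw [← hq, ← h] at h2'
    omega
  unfold invN
  apply card_toggle (e := (min p q, max p q))
  · rintro ⟨a, b⟩ hx
    simp only [Finset.mem_filter, Finset.mem_product, Finset.mem_range]
    constructor
    · rintro ⟨⟨han, hbn⟩, hab, hinv⟩
      refine ⟨⟨han, hbn⟩, hab, ?_⟩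
      rw [pf_swap_mul h1 h2, pf_swap_mul h1 h2] at hinv
      rw [← sf_lt_sf (v := v)]
      · exact hinv
      · rintro ⟨ha, hb⟩
        have : a = p := by rw [hp, ← ha, posf_pf π han]
        have : b = q := by rw [hq, ← hb, posf_pf π hbn]
        apply hx
        simp_all [Prod.ext_iff] <;> omega
      · rintro ⟨ha, hb⟩
        have : a = q := by rw [hq, ← ha, posf_pf π han]
        have : b = p := by rw [hp, ← hb, posf_pf π hbn]
        apply hx
        simp_all [Prod.ext_iff] <;> omega
    · rintro ⟨⟨han, hbn⟩, hab, hinv⟩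
      refine ⟨⟨han, hbn⟩, hab, ?_⟩
      rw [pf_swap_mul h1 h2, pf_swap_mul h1 h2]
      rw [sf_lt_sf (v := v)]
      · exact hinv
      · rintro ⟨ha, hb⟩
        have : a = p := by rw [hp, ← ha, posf_pf π han]
        have : b = q := by rw [hq, ← hb, posf_pf π hbn]
        apply hx
        simp_all [Prod.ext_iff] <;> omega
      · rintro ⟨ha, hb⟩
        have : a = q := by rw [hq, ← ha, posf_pf π han]
        have : b = p := by rw [hp, ← hb, posf_pf π hbn]
        apply hx
        simp_all [Prod.ext_iff] <;> omega
  · have hvp : pf π p = v := pf_posf π (by omega)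
    have hvq : pf π q = v + 1 := pf_posf π (by omega)
    have hvp' : pf (Equiv.swap ⟨v, h1⟩ ⟨v + 1, h2⟩ * π) p = v + 1 := by
      rw [pf_swap_mul h1 h2, hvp, sf, if_pos rfl]
    have hvq' : pf (Equiv.swap ⟨v, h1⟩ ⟨v + 1, h2⟩ * π) q = v := by
      rw [pf_swap_mul h1 h2, hvq]
      unfold sf
      rw [if_neg (by omega), if_pos rfl]
    simp only [Finset.mem_filter, Finset.mem_product, Finset.mem_range]
    rcases lt_or_gt_of_ne hpq with h | h
    · rw [min_eq_left h.le, max_eq_right h.le]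
      simp only [hvp', hvq', hvp, hvq]
      constructor
      · intro _
        rintro ⟨-, -, hc⟩
        omega
      · intro _
        exact ⟨⟨hpn, hqn⟩, h, by omega⟩
    · rw [min_eq_right h.le, max_eq_left h.le]
      simp only [hvp', hvq', hvp, hvq]
      constructor
      · rintro ⟨-, -, hc⟩
        omega
      · intro hcon
        exact absurd (fun hmem => hcon hmem) (by intro hc; exact hc ⟨⟨hqn, hpn⟩, h, by omega⟩)

lemma sf_apply_self (v : ℕ) : sf v v = v + 1 := by unfold sf; rw [if_pos rfl]

lemma sf_apply_succ (v : ℕ) : sf v (v + 1) = v := by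
  unfold sf; rw [if_neg (by omega), if_pos rfl]

lemma sf_apply_other {v w : ℕ} (h : w ≠ v) (h' : w ≠ v + 1) : sf v w = w := by
  unfold sf; rw [if_neg h, if_neg h']

lemma min'_congr {s t : Finset ℕ} (h : s = t) (hs : s.Nonempty) :
    s.min' hs = t.min' (h ▸ hs) := by subst h; rfl

instance {π : Equiv.Perm (Fin n)} {v : ℕ} : Decidable (sep π v) := by
  unfold sep; infer_instance

/-- The set of indices of non-adjacent pairs. -/
def badset (π : Equiv.Perm (Fin n)) : Finset ℕ :=
  (Finset.range (n / 2)).filter fun i => sep π (2 * i)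

lemma mem_badset {π : Equiv.Perm (Fin n)} {i : ℕ} :
    i ∈ badset π ↔ i < n / 2 ∧ sep π (2 * i) := by
  unfold badset; simp [Finset.mem_filter]

lemma badset_swap_mul {i₀ : ℕ} (h1 : 2 * i₀ < n) (h2 : 2 * i₀ + 1 < n)
    (π : Equiv.Perm (Fin n)) :
    badset (Equiv.swap ⟨2 * i₀, h1⟩ ⟨2 * i₀ + 1, h2⟩ * π) = badset π := by
  unfold badset
  apply Finset.filter_congr
  intro i hi
  by_cases hii : i = i₀
  · subst hii
    unfold sep
    rw [posf_swap_mul h1 h2, posf_swap_mul h1 h2, sf_apply_self, sf_apply_succ]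
    exact ⟨fun h => ⟨h.2, h.1⟩, fun h => ⟨h.2, h.1⟩⟩
  · unfold sep
    rw [posf_swap_mul h1 h2, posf_swap_mul h1 h2,
      sf_apply_other (by omega) (by omega), sf_apply_other (by omega) (by omega)]

end SwapLemmas

lemma two_mul_min'_lt {π : Equiv.Perm (Fin n)} (hne : (badset π).Nonempty) :
    2 * ((badset π).min' hne) + 1 < n := by
  have h := (mem_badset.mp (Finset.min'_mem _ hne)).1
  omega

/-- Minimum of the badset (0 if empty). -/
def bmin (π : Equiv.Perm (Fin n)) : ℕ :=
  if h : (badset π).Nonempty then (badset π).min' h else 0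

lemma bmin_lt {π : Equiv.Perm (Fin n)} (hne : (badset π).Nonempty) : 2 * bmin π + 1 < n := by
  unfold bmin; rw [dif_pos hne]; exact two_mul_min'_lt hne

lemma bmin_mem {π : Equiv.Perm (Fin n)} (hne : (badset π).Nonempty) : bmin π ∈ badset π := by
  unfold bmin; rw [dif_pos hne]; exact Finset.min'_mem _ _

lemma bmin_congr {π π' : Equiv.Perm (Fin n)} (h : badset π = badset π') :
    bmin π = bmin π' := by
  simp only [bmin, h]

/-- The sign-reversing involution. -/
def gswap (π : Equiv.Perm (Fin n)) (hne : (badset π).Nonempty) : Equiv.Perm (Fin n) :=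
  Equiv.swap ⟨2 * bmin π, by have := bmin_lt hne; omega⟩ ⟨2 * bmin π + 1, bmin_lt hne⟩ * π

lemma gswap_eq (π : Equiv.Perm (Fin n)) (hne : (badset π).Nonempty) {k : ℕ}
    (hk : bmin π = k) (hk2 : 2 * k + 1 < n) :
    gswap π hne = Equiv.swap ⟨2 * k, by omega⟩ ⟨2 * k + 1, hk2⟩ * π := by
  subst hk; rfl

lemma gswap_sep (π : Equiv.Perm (Fin n)) (hne : (badset π).Nonempty) :
    sep π (2 * bmin π) := (mem_badset.mp (bmin_mem hne)).2

lemma desN_gswap (π : Equiv.Perm (Fin n)) (hne : (badset π).Nonempty) :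
    desN (gswap π hne) = desN π := desN_swap_mul _ _ _ (gswap_sep π hne)

lemma invN_gswap (π : Equiv.Perm (Fin n)) (hne : (badset π).Nonempty) :
    invN (gswap π hne) = invN π + 1 ∨ invN π = invN (gswap π hne) + 1 :=
  invN_swap_mul _ _ _ (gswap_sep π hne)

lemma badset_gswap (π : Equiv.Perm (Fin n)) (hne : (badset π).Nonempty) :
    badset (gswap π hne) = badset π := badset_swap_mul _ _ _

lemma gswap_ne (π : Equiv.Perm (Fin n)) (hne : (badset π).Nonempty) :
    gswap π hne ≠ π := by
  intro heq
  have hlt := bmin_lt hne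
  have h := congrArg (fun ρ => pf ρ (posf π (2 * bmin π))) heq
  simp only [gswap] at h
  rw [pf_swap_mul (by omega) hlt] at h
  rw [pf_posf π (show 2 * bmin π < n by omega)] at h
  rw [sf_apply_self] at h
  omega

lemma gswap_gswap (π : Equiv.Perm (Fin n)) (hne : (badset π).Nonempty)
    (hne' : (badset (gswap π hne)).Nonempty) : gswap (gswap π hne) hne' = π := by
  have hb : bmin (gswap π hne) = bmin π := bmin_congr (badset_gswap π hne)
  have hlt := bmin_lt hne
  rw [gswap_eq (gswap π hne) hne' hb hlt, gswap_eq π hne rfl hlt,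
    ← mul_assoc, Equiv.swap_mul_self, one_mul]

lemma sum_bad_eq_zero {R : Type*} [CommRing R] (t : R) :
    ∑ π ∈ Finset.univ.filter (fun π : Equiv.Perm (Fin n) => badset π ≠ ∅),
      t ^ desN π * (-1 : R) ^ invN π = 0 := by
  have hne : ∀ π : Equiv.Perm (Fin n),
      π ∈ Finset.univ.filter (fun π : Equiv.Perm (Fin n) => badset π ≠ ∅) →
      (badset π).Nonempty := fun π hπ =>
    Finset.nonempty_iff_ne_empty.mpr (by simpa using (Finset.mem_filter.mp hπ).2)
  apply Finset.sum_involution (g := fun π hπ => gswap π (hne π hπ))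
  · intro π hπ
    rw [desN_gswap]
    rcases invN_gswap π (hne π hπ) with h | h
    · rw [h, pow_succ]; ring
    · rw [h, pow_succ]; ring
  · intro π hπ _
    exact gswap_ne π (hne π hπ)
  · intro π hπ
    exact gswap_gswap π (hne π hπ) _
  · intro π hπ
    simp only [Finset.mem_filter, Finset.mem_univ, true_and]
    rw [badset_gswap]
    simpa using (Finset.mem_filter.mp hπ).2

/-! ### Block permutations -/

/-- Length of item `b`: pairs `b < m` have length 2, the singleton has length 1. -/
def lenB (m b : ℕ) : ℕ := if b < m then 2 else 1

lemma lenB_pos (m b : ℕ) : 0 < lenB m b := by unfold lenB; split_ifs <;> omega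

lemma lenB_le (m b : ℕ) : lenB m b ≤ 2 := by unfold lenB; split_ifs <;> omega

/-- Start position of slot `j` in the block arrangement given by `σ`. -/
def stS (m : ℕ) {M : ℕ} (σ : Equiv.Perm (Fin M)) (j : ℕ) : ℕ :=
  ∑ j' ∈ Finset.range j, lenB m (pf σ j')

lemma stS_succ {m M : ℕ} (σ : Equiv.Perm (Fin M)) (j : ℕ) :
    stS m σ (j + 1) = stS m σ j + lenB m (pf σ j) := Finset.sum_range_succ _ _

lemma stS_strict_mono {m M : ℕ} (σ : Equiv.Perm (Fin M)) {j j' : ℕ} (h : j < j') :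
    stS m σ j < stS m σ j' := by
  induction j' with
  | zero => omega
  | succ k ih =>
    rw [stS_succ]
    have := lenB_pos m (pf σ k)
    rcases Nat.lt_succ_iff_lt_or_eq.mp h with h' | h'
    · have := ih h'; omega
    · subst h'; omega

lemma stS_mono {m M : ℕ} (σ : Equiv.Perm (Fin M)) {j j' : ℕ} (h : j ≤ j') :
    stS m σ j ≤ stS m σ j' := by
  rcases Nat.eq_or_lt_of_le h with h' | h'
  · subst h'; exact le_rfl
  · exact (stS_strict_mono σ h').le

lemma sum_range_perm {M : ℕ} (σ : Equiv.Perm (Fin M)) (f : ℕ → ℕ) :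
    ∑ j ∈ Finset.range M, f (pf σ j) = ∑ b ∈ Finset.range M, f b := by
  rw [← Fin.sum_univ_eq_sum_range (fun j => f (pf σ j)), ← Fin.sum_univ_eq_sum_range f]
  rw [show (fun j : Fin M => f (pf σ j)) = fun j : Fin M => f (σ j) from ?_]
  · exact Equiv.sum_comp σ (fun x => f x)
  · funext j
    rw [pf_eq σ j.isLt]

lemma stS_top {m r : ℕ} (σ : Equiv.Perm (Fin (m + r))) : stS m σ (m + r) = 2 * m + r := by
  unfold stS
  rw [sum_range_perm]
  have h1 : ∀ b ∈ Finset.range m, lenB m b = 2 := by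
    intro b hb; unfold lenB; rw [if_pos (Finset.mem_range.mp hb)]
  have h2 : ∀ b ∈ Finset.Ico m (m + r), lenB m b = 1 := by
    intro b hb; unfold lenB; rw [if_neg (by have := (Finset.mem_Ico.mp hb).1; omega)]
  rw [Finset.range_eq_Ico, ← Finset.sum_Ico_consecutive _ (Nat.zero_le m) (by omega : m ≤ m + r)]
  rw [← Finset.range_eq_Ico, Finset.sum_congr rfl h1, Finset.sum_congr rfl h2]
  simp only [Finset.sum_const, smul_eq_mul, Finset.card_range, Nat.card_Ico]
  omega

lemma exists_slot {m M : ℕ} (σ : Equiv.Perm (Fin M)) {p : ℕ} (hp : p < stS m σ M) :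
    ∃ j < M, stS m σ j ≤ p ∧ p < stS m σ (j + 1) := by
  have hM : 0 < M := by
    by_contra h
    have : M = 0 := by omega
    subst this
    simp [stS] at hp
  have hAne : ((Finset.range M).filter (fun j => stS m σ j ≤ p)).Nonempty :=
    ⟨0, by rw [Finset.mem_filter, Finset.mem_range]; exact ⟨hM, by simp [stS]⟩⟩
  obtain ⟨hjr, hjle⟩ := Finset.mem_filter.mp (Finset.max'_mem _ hAne)
  set j := ((Finset.range M).filter (fun j => stS m σ j ≤ p)).max' hAne with hj
  refine ⟨j, Finset.mem_range.mp hjr, hjle, ?_⟩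
  by_contra h
  push_neg at h
  have hj1 : j + 1 < M := by
    by_contra h'
    have := stS_mono σ (show M ≤ j + 1 by omega) (m := m)
    omega
  have hmem : j + 1 ∈ (Finset.range M).filter (fun j => stS m σ j ≤ p) := by
    rw [Finset.mem_filter, Finset.mem_range]
    exact ⟨hj1, h⟩
  have := Finset.le_max' _ _ hmem
  omega

lemma slot_unique {m M : ℕ} (σ : Equiv.Perm (Fin M)) {p j j' : ℕ}
    (h1 : stS m σ j ≤ p) (h2 : p < stS m σ (j + 1))
    (h1' : stS m σ j' ≤ p) (h2' : p < stS m σ (j' + 1)) : j = j' := by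
  by_contra h
  rcases Nat.lt_or_ge j j' with h' | h'
  · have := stS_mono σ (show j + 1 ≤ j' by omega) (m := m)
    omega
  · have hlt : j' < j := by omega
    have := stS_mono σ (show j' + 1 ≤ j by omega) (m := m)
    omega

/-- Offset of a value within its block. -/
def ofsE {m : ℕ} (ε : Fin m → Bool) (v : ℕ) : ℕ :=
  if hb : v / 2 < m then (if ε ⟨v / 2, hb⟩ then 1 - v % 2 else v % 2) else 0

/-- Position of value `v` in the block permutation determined by `(σ, ε)`. -/
def iotaF {m r : ℕ} (σ : Equiv.Perm (Fin (m + r))) (ε : Fin m → Bool) (v : ℕ) : ℕ :=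
  if v < 2 * m + r then stS m σ (posf σ (v / 2)) + ofsE ε v else v

section PhiSec

variable {m r : ℕ} (σ : Equiv.Perm (Fin (m + r))) (ε : Fin m → Bool)

lemma div2_lt {v : ℕ} (hv : v < 2 * m + r) : v / 2 < m + r := by omega

lemma ofsE_lt {v : ℕ} (hv : v < 2 * m + r) : ofsE ε v < lenB m (v / 2) := by
  unfold ofsE lenB
  split_ifs with h1 h2 h3 <;> omega

lemma iotaF_bounds {v : ℕ} (hv : v < 2 * m + r) :
    stS m σ (posf σ (v / 2)) ≤ iotaF σ ε v ∧
      iotaF σ ε v < stS m σ (posf σ (v / 2) + 1) := by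
  unfold iotaF
  rw [if_pos hv]
  have hb : v / 2 < m + r := div2_lt hv
  have hpl : posf σ (v / 2) < m + r := posf_lt σ hb
  have hpp : pf σ (posf σ (v / 2)) = v / 2 := pf_posf σ hb
  constructor
  · omega
  · rw [stS_succ, hpp]
    have := ofsE_lt ε hv
    omega

lemma iotaF_lt {v : ℕ} (hv : v < 2 * m + r) : iotaF σ ε v < 2 * m + r := by
  have h := (iotaF_bounds σ ε hv).2
  have hpl : posf σ (v / 2) < m + r := posf_lt σ (div2_lt hv)
  have := stS_mono σ (show posf σ (v / 2) + 1 ≤ m + r by omega) (m := m)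
  rw [stS_top] at this
  omega

lemma iotaF_inj (hr : r ≤ 1) {v w : ℕ} (hv : v < 2 * m + r) (hw : w < 2 * m + r)
    (h : iotaF σ ε v = iotaF σ ε w) : v = w := by
  have hbv := iotaF_bounds σ ε hv
  have hbw := iotaF_bounds σ ε hw
  rw [h] at hbv
  have hslot : posf σ (v / 2) = posf σ (w / 2) :=
    slot_unique σ hbv.1 hbv.2 hbw.1 hbw.2
  have hdiv : v / 2 = w / 2 := by
    have h1 := pf_posf σ (div2_lt hv (r := r))
    have h2 := pf_posf σ (div2_lt hw (r := r))
    rw [hslot] at h1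
    omega
  have hofs : ofsE ε v = ofsE ε w := by
    unfold iotaF at h
    rw [if_pos hv, if_pos hw, hslot] at h
    omega
  unfold ofsE at hofs
  rw [hdiv] at hofs
  split_ifs at hofs with h1 h2 <;> omega

/-- The block permutation associated to `(σ, ε)`. -/
noncomputable def PhiP (hr : r ≤ 1) : Equiv.Perm (Fin (2 * m + r)) :=
  (Equiv.ofBijective (fun v : Fin (2 * m + r) => (⟨iotaF σ ε v, iotaF_lt σ ε v.isLt⟩ :
      Fin (2 * m + r)))
    (Finite.injective_iff_bijective.mp (fun v w h => by
      apply Fin.ext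
      exact iotaF_inj σ ε hr v.isLt w.isLt (by simpa [Fin.ext_iff] using h)))).symm

lemma posf_PhiP (hr : r ≤ 1) {v : ℕ} (hv : v < 2 * m + r) : posf (PhiP σ ε hr) v = iotaF σ ε v := by
  rw [posf_eq _ hv]
  rfl

lemma pf_PhiP (hr : r ≤ 1) {v : ℕ} (hv : v < 2 * m + r) : pf (PhiP σ ε hr) (iotaF σ ε v) = v := by
  rw [← posf_PhiP σ ε hr hv]
  exact pf_posf _ hv

lemma iotaF_val {v : ℕ} (hv : v < 2 * m + r) :
    iotaF σ ε v = stS m σ (posf σ (v / 2)) + ofsE ε v := by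
  unfold iotaF; rw [if_pos hv]

lemma ofsE_low {b : ℕ} (hb : b < m) :
    ofsE ε (2 * b) = (if ε ⟨b, hb⟩ then 1 else 0) ∧
      ofsE ε (2 * b + 1) = (if ε ⟨b, hb⟩ then 0 else 1) := by
  have h1 : (2 * b) / 2 = b := by omega
  have h2 : (2 * b + 1) / 2 = b := by omega
  have h3 : (2 * b) % 2 = 0 := by omega
  have h4 : (2 * b + 1) % 2 = 1 := by omega
  unfold ofsE
  refine ⟨?_, ?_⟩ <;> simp only [h1, h2, h3, h4, dif_pos hb] <;>
    cases ε ⟨b, hb⟩ <;> simp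

lemma ofsE_high {v : ℕ} (hm : ¬ v / 2 < m) : ofsE ε v = 0 := dif_neg hm

lemma pf_PhiP_pair (hr : r ≤ 1) {j b : ℕ} (hj : j < m + r) (hb : b < m) (hbs : pf σ j = b) :
    pf (PhiP σ ε hr) (stS m σ j) = 2 * b + (if ε ⟨b, hb⟩ then 1 else 0) ∧
      pf (PhiP σ ε hr) (stS m σ j + 1) = 2 * b + (if ε ⟨b, hb⟩ then 0 else 1) := by
  have hpos : posf σ b = j := by rw [← hbs]; exact posf_pf σ hj
  have o := ofsE_low ε hb
  have hv0 : 2 * b < 2 * m + r := by omega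
  have hv1 : 2 * b + 1 < 2 * m + r := by omega
  have h1 : (2 * b) / 2 = b := by omega
  have h2 : (2 * b + 1) / 2 = b := by omega
  have t0 := pf_PhiP σ ε hr hv0
  have t1 := pf_PhiP σ ε hr hv1
  rw [iotaF_val σ ε hv0, h1, hpos, o.1] at t0
  rw [iotaF_val σ ε hv1, h2, hpos, o.2] at t1
  cases hε : ε ⟨b, hb⟩
  · rw [hε] at t0 t1
    simp only [Bool.false_eq_true, if_false] at t0 t1 ⊢
    rw [Nat.add_zero] at t0
    exact ⟨t0, t1⟩
  · rw [hε] at t0 t1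
    simp only [if_true] at t0 t1 ⊢
    rw [Nat.add_zero] at t1
    exact ⟨t1, t0⟩

lemma pf_PhiP_high (hr : r ≤ 1) {j : ℕ} (hj : j < m + r) (hbs : ¬ pf σ j < m) :
    pf (PhiP σ ε hr) (stS m σ j) = 2 * m ∧ r = 1 ∧ pf σ j = m := by
  have hlt : pf σ j < m + r := pf_lt σ hj
  have hr1 : r = 1 := by omega
  have hm' : pf σ j = m := by omega
  have hpos : posf σ m = j := by
    have h := posf_pf σ hj
    rw [hm'] at h
    exact h
  have hv : 2 * m < 2 * m + r := by omega
  have h1 : (2 * m) / 2 = m := by omega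
  have t := pf_PhiP σ ε hr hv
  rw [iotaF_val σ ε hv, h1, hpos, ofsE_high ε (by omega), Nat.add_zero] at t
  exact ⟨t, hr1, hm'⟩

/-- Any position in slot `j` carries a value of item `pf σ j`. -/
lemma pf_PhiP_slot (hr : r ≤ 1) {p j : ℕ} (hj : j < m + r)
    (h1 : stS m σ j ≤ p) (h2 : p < stS m σ (j + 1)) :
    2 * pf σ j ≤ pf (PhiP σ ε hr) p ∧ pf (PhiP σ ε hr) p ≤ 2 * pf σ j + 1 := by
  rw [stS_succ] at h2
  by_cases hb : pf σ j < m
  · have hpair := pf_PhiP_pair σ ε hr hj hb rfl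
    have hlen : lenB m (pf σ j) = 2 := if_pos hb
    rw [hlen] at h2
    rcases (show p = stS m σ j ∨ p = stS m σ j + 1 by omega) with h | h
    · rw [h, hpair.1]; split_ifs <;> omega
    · rw [h, hpair.2]; split_ifs <;> omega
  · have hhigh := pf_PhiP_high σ ε hr hj hb
    have hlen : lenB m (pf σ j) = 1 := if_neg hb
    rw [hlen] at h2
    have hp : p = stS m σ j := by omega
    rw [hp, hhigh.1, hhigh.2.2]
    omega

lemma stS_inj {j j' : ℕ} (h : stS m σ j = stS m σ j') : j = j' := by
  rcases Nat.lt_trichotomy j j' with h' | h' | h'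
  · have := stS_strict_mono σ h' (m := m); omega
  · exact h'
  · have := stS_strict_mono σ h' (m := m); omega

lemma desc_boundary (hr : r ≤ 1) {j : ℕ} (hj : j + 1 < m + r) :
    (pf (PhiP σ ε hr) (stS m σ (j + 1) - 1 + 1) < pf (PhiP σ ε hr) (stS m σ (j + 1) - 1)) ↔
      pf σ (j + 1) < pf σ j := by
  have hpos : 0 < stS m σ (j + 1) := by
    have := stS_strict_mono σ (show 0 < j + 1 by omega) (m := m)
    simpa [stS] using this
  have hsucc := stS_succ σ j (m := m)
  have hsucc2 := stS_succ σ (j + 1) (m := m)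
  have hlp := lenB_pos m (pf σ j)
  have hll := lenB_le m (pf σ j)
  have hlp2 := lenB_pos m (pf σ (j + 1))
  have hA := pf_PhiP_slot σ ε hr (show j < m + r by omega)
    (show stS m σ j ≤ stS m σ (j + 1) - 1 by omega)
    (show stS m σ (j + 1) - 1 < stS m σ (j + 1) by omega)
  have hB := pf_PhiP_slot σ ε hr hj
    (show stS m σ (j + 1) ≤ stS m σ (j + 1) - 1 + 1 by omega)
    (show stS m σ (j + 1) - 1 + 1 < stS m σ (j + 1 + 1) by omega)
  have hne : pf σ j ≠ pf σ (j + 1) := by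
    intro h
    have := pf_inj σ (show j < m + r by omega) (show j + 1 < m + r by omega) h
    omega
  omega

lemma desc_internal (hr : r ≤ 1) {j : ℕ} (hj : j < m + r) (hb : pf σ j < m) :
    (pf (PhiP σ ε hr) (stS m σ j + 1) < pf (PhiP σ ε hr) (stS m σ j)) ↔
      ε ⟨pf σ j, hb⟩ = true := by
  have hpair := pf_PhiP_pair σ ε hr hj hb rfl
  rw [hpair.1, hpair.2]
  cases hε : ε ⟨pf σ j, hb⟩ <;> simp <;> omega

/-- Weight of a sign-vector. -/
def wtE {m : ℕ} (ε : Fin m → Bool) : ℕ :=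
  (Finset.univ.filter (fun i : Fin m => ε i = true)).card

lemma card_filter_perm {M : ℕ} (σ : Equiv.Perm (Fin M)) (Q : ℕ → Prop) [DecidablePred Q] :
    ((Finset.range M).filter (fun j => Q (pf σ j))).card =
      ((Finset.range M).filter Q).card := by
  rw [Finset.card_filter, Finset.card_filter]
  exact sum_range_perm σ (fun x => if Q x then 1 else 0)

lemma card_B_eq_wt (hr : r ≤ 1) :
    ((Finset.range (m + r)).filter
        (fun j => if h : pf σ j < m then ε ⟨pf σ j, h⟩ = true else False)).card = wtE ε := by
  rw [card_filter_perm σ (fun b => if h : b < m then ε ⟨b, h⟩ = true else False)]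
  have hres : (Finset.range (m + r)).filter
      (fun b => if h : b < m then ε ⟨b, h⟩ = true else False) =
      (Finset.range m).filter (fun b => if h : b < m then ε ⟨b, h⟩ = true else False) := by
    ext b
    simp only [Finset.mem_filter, Finset.mem_range]
    constructor
    · rintro ⟨hb, hq⟩
      by_cases h : b < m
      · exact ⟨h, hq⟩
      · rw [dif_neg h] at hq; exact absurd hq id
    · rintro ⟨hb, hq⟩
      exact ⟨by omega, hq⟩
  rw [hres, Finset.card_filter, ← Fin.sum_univ_eq_sum_range
    (fun b => if (if h : b < m then ε ⟨b, h⟩ = true else False) then 1 else 0) m]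
  rw [wtE, Finset.card_filter]
  apply Finset.sum_congr rfl
  intro i _
  have hi : (↑i : ℕ) < m := i.isLt
  simp [hi]

lemma desN_PhiP (hr : r ≤ 1) : desN (PhiP σ ε hr) = desN σ + wtE ε := by
  classical
  have hstM := stS_top σ
  set A := (Finset.range (m + r - 1)).filter (fun j => pf σ (j + 1) < pf σ j) with hA
  set B := (Finset.range (m + r)).filter
    (fun j => if h : pf σ j < m then ε ⟨pf σ j, h⟩ = true else False) with hB
  have lenB_two : ∀ j : ℕ, pf σ j < m → lenB m (pf σ j) = 2 := fun j h => if_pos h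
  have lenB_one : ∀ j : ℕ, ¬ pf σ j < m → lenB m (pf σ j) = 1 := fun j h => if_neg h
  have hset : (Finset.range (2 * m + r - 1)).filter
        (fun i => pf (PhiP σ ε hr) (i + 1) < pf (PhiP σ ε hr) i)
      = A.image (fun j => stS m σ (j + 1) - 1) ∪ B.image (fun j => stS m σ j) := by
    ext i
    simp only [Finset.mem_filter, Finset.mem_range, Finset.mem_union, Finset.mem_image]
    constructor
    · rintro ⟨hiN, hdesc⟩
      have hiN' : i < stS m σ (m + r) := by rw [hstM]; omega
      obtain ⟨j, hjM, hj1, hj2⟩ := exists_slot σ hiN'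
      by_cases hcase : i + 1 = stS m σ (j + 1)
      · left
        have hj1M : j + 1 < m + r := by
          by_contra h
          have := stS_mono σ (show m + r ≤ j + 1 by omega) (m := m)
          omega
        refine ⟨j, ?_, by omega⟩
        rw [hA, Finset.mem_filter, Finset.mem_range]
        refine ⟨by omega, ?_⟩
        have hdb := desc_boundary σ ε hr hj1M
        rw [show stS m σ (j + 1) - 1 = i by omega] at hdb
        exact hdb.mp hdesc
      · right
        have hsucc := stS_succ σ j (m := m)
        have hll := lenB_le m (pf σ j)
        have hlen2 : lenB m (pf σ j) = 2 := by omega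
        have hb : pf σ j < m := by
          by_contra h
          have := lenB_one j h
          omega
        have hieq : i = stS m σ j := by omega
        refine ⟨j, ?_, hieq.symm⟩
        rw [hB, Finset.mem_filter, Finset.mem_range]
        refine ⟨hjM, ?_⟩
        rw [dif_pos hb]
        have hdi := desc_internal σ ε hr hjM hb
        rw [← hieq] at hdi
        exact hdi.mp hdesc
    · rintro (⟨j, hjA, rfl⟩ | ⟨j, hjB, rfl⟩)
      · rw [hA, Finset.mem_filter, Finset.mem_range] at hjA
        have hj1M : j + 1 < m + r := by omega
        have hpos : 0 < stS m σ (j + 1) := by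
          have := stS_strict_mono σ (show 0 < j + 1 by omega) (m := m)
          simpa [stS] using this
        have hlt : stS m σ (j + 1) < stS m σ (m + r) := stS_strict_mono σ (by omega)
        refine ⟨by omega, ?_⟩
        exact (desc_boundary σ ε hr hj1M).mpr hjA.2
      · rw [hB, Finset.mem_filter, Finset.mem_range] at hjB
        obtain ⟨hjM, hbit⟩ := hjB
        have hb : pf σ j < m := by
          by_contra h
          rw [dif_neg h] at hbit
          exact hbit
        rw [dif_pos hb] at hbit
        have hsucc := stS_succ σ j (m := m)
        have hlen2 := lenB_two j hb
        have hle : stS m σ (j + 1) ≤ stS m σ (m + r) := stS_mono σ (by omega)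
        refine ⟨by omega, ?_⟩
        exact (desc_internal σ ε hr hjM hb).mpr hbit
  have hdisj : Disjoint (A.image (fun j => stS m σ (j + 1) - 1))
      (B.image (fun j => stS m σ j)) := by
    rw [Finset.disjoint_left]
    rintro x hxA hxB
    obtain ⟨j, hjA, hxj⟩ := Finset.mem_image.mp hxA
    obtain ⟨j', hjB, hxj'⟩ := Finset.mem_image.mp hxB
    rw [hA, Finset.mem_filter, Finset.mem_range] at hjA
    rw [hB, Finset.mem_filter, Finset.mem_range] at hjB
    have hxj2 : stS m σ (j + 1) - 1 = x := hxj
    have hxj2' : stS m σ j' = x := hxj'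
    have hb' : pf σ j' < m := by
      by_contra h
      rw [dif_neg h] at hjB
      exact hjB.2
    have hlen2 := lenB_two j' hb'
    have hsuccj := stS_succ σ j (m := m)
    have hsuccj' := stS_succ σ j' (m := m)
    have hlpj := lenB_pos m (pf σ j)
    have hllj := lenB_le m (pf σ j)
    have heq : stS m σ (j + 1) - 1 = stS m σ j' := by omega
    rcases Nat.lt_trichotomy j' (j + 1) with h | h | h
    · have hle : stS m σ j' ≤ stS m σ j := stS_mono σ (by omega)
      have heq2 : stS m σ j' = stS m σ j := by omega
      have hjj : j' = j := stS_inj σ heq2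
      subst hjj
      omega
    · subst h
      have hpos : 0 < stS m σ (j + 1) := by
        have := stS_strict_mono σ (show 0 < j + 1 by omega) (m := m)
        simpa [stS] using this
      omega
    · have := stS_strict_mono σ (show j + 1 < j' by omega) (m := m)
      omega
  rw [desN, hset, Finset.card_union_of_disjoint hdisj,
    Finset.card_image_of_injOn, Finset.card_image_of_injOn]
  · have hcardA : A.card = desN σ := rfl
    have hcardB := card_B_eq_wt σ ε hr
    rw [hcardA, ← hB] at *
    rw [hcardB]
  · intro j _ j' _ h
    exact stS_inj σ h
  · intro j hj j' hj' h
    have hjA : j ∈ A := Finset.mem_coe.mp hj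
    have hjA' : j' ∈ A := Finset.mem_coe.mp hj'
    have hh : stS m σ (j + 1) - 1 = stS m σ (j' + 1) - 1 := h
    have h1 : 0 < stS m σ (j + 1) := by
      have := stS_strict_mono σ (show 0 < j + 1 by omega) (m := m)
      simpa [stS] using this
    have h2 : 0 < stS m σ (j' + 1) := by
      have := stS_strict_mono σ (show 0 < j' + 1 by omega) (m := m)
      simpa [stS] using this
    have : stS m σ (j + 1) = stS m σ (j' + 1) := by omega
    have := stS_inj σ this
    omega



lemma even_finset_sum {α : Type*} (s : Finset α) (f : α → ℕ)
    (h : ∀ x ∈ s, Even (f x)) : Even (∑ x ∈ s, f x) := by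
  induction s using Finset.cons_induction with
  | empty => simp
  | cons a s ha ih =>
    rw [Finset.sum_cons]
    exact (h a (Finset.mem_cons_self a s)).add
      (ih fun x hx => h x (Finset.mem_cons.mpr (Or.inr hx)))

lemma invN_PhiP (hr : r ≤ 1) : ∃ c : ℕ, Even c ∧ invN (PhiP σ ε hr) = wtE ε + c := by
  classical
  have hstM := stS_top σ
  set B := (Finset.range (m + r)).filter
    (fun j => if h : pf σ j < m then ε ⟨pf σ j, h⟩ = true else False) with hB
  set W := B.image (fun j => (stS m σ j, stS m σ j + 1)) with hW
  set P := ((Finset.range (m + r) ×ˢ Finset.range (m + r)).filter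
    (fun q => q.1 < q.2 ∧ pf σ q.2 < pf σ q.1)) with hP
  set C := P.biUnion (fun q => (Finset.Ico (stS m σ q.1) (stS m σ (q.1 + 1))) ×ˢ
    (Finset.Ico (stS m σ q.2) (stS m σ (q.2 + 1)))) with hC
  have memB : ∀ j, j ∈ B ↔ j < m + r ∧ ∃ h : pf σ j < m, ε ⟨pf σ j, h⟩ = true := by
    intro j
    rw [hB, Finset.mem_filter, Finset.mem_range]
    constructor
    · rintro ⟨h1, h2⟩
      refine ⟨h1, ?_⟩
      by_cases h : pf σ j < m
      · rw [dif_pos h] at h2; exact ⟨h, h2⟩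
      · rw [dif_neg h] at h2; exact absurd h2 id
    · rintro ⟨h1, h, h2⟩
      exact ⟨h1, by rw [dif_pos h]; exact h2⟩
  have memC : ∀ x : ℕ × ℕ, x ∈ C ↔ ∃ j j', (j < m + r ∧ j' < m + r ∧ j < j' ∧
      pf σ j' < pf σ j) ∧ stS m σ j ≤ x.1 ∧ x.1 < stS m σ (j + 1) ∧
      stS m σ j' ≤ x.2 ∧ x.2 < stS m σ (j' + 1) := by
    intro x
    rw [hC, Finset.mem_biUnion]
    constructor
    · rintro ⟨q, hq, hx⟩
      rw [hP, Finset.mem_filter, Finset.mem_product, Finset.mem_range, Finset.mem_range] at hq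
      rw [Finset.mem_product, Finset.mem_Ico, Finset.mem_Ico] at hx
      exact ⟨q.1, q.2, ⟨hq.1.1, hq.1.2, hq.2.1, hq.2.2⟩, hx.1.1, hx.1.2, hx.2.1, hx.2.2⟩
    · rintro ⟨j, j', ⟨h1, h2, h3, h4⟩, h5, h6, h7, h8⟩
      refine ⟨(j, j'), ?_, ?_⟩
      · rw [hP, Finset.mem_filter, Finset.mem_product]
        exact ⟨⟨Finset.mem_range.mpr h1, Finset.mem_range.mpr h2⟩, h3, h4⟩
      · rw [Finset.mem_product, Finset.mem_Ico, Finset.mem_Ico]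
        exact ⟨⟨h5, h6⟩, h7, h8⟩
  have hIWC : ((Finset.range (2 * m + r) ×ˢ Finset.range (2 * m + r)).filter
      (fun x => x.1 < x.2 ∧ pf (PhiP σ ε hr) x.2 < pf (PhiP σ ε hr) x.1)) = W ∪ C := by
    ext x
    obtain ⟨p, q⟩ := x
    rw [Finset.mem_filter, Finset.mem_product, Finset.mem_union]
    simp only [Finset.mem_range]
    constructor
    · rintro ⟨⟨hp, hq⟩, hpq, hinv⟩
      have hinv' : pf (PhiP σ ε hr) q < pf (PhiP σ ε hr) p := hinv
      have hp' : p < stS m σ (m + r) := by omega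
      have hq' : q < stS m σ (m + r) := by omega
      obtain ⟨j, hjM, hj1, hj2⟩ := exists_slot σ hp'
      obtain ⟨j', hjM', hj1', hj2'⟩ := exists_slot σ hq'
      have hvp := pf_PhiP_slot σ ε hr hjM hj1 hj2
      have hvq := pf_PhiP_slot σ ε hr hjM' hj1' hj2'
      have hjle : j ≤ j' := by
        by_contra h
        have := stS_mono σ (show j' + 1 ≤ j by omega) (m := m)
        omega
      rcases Nat.eq_or_lt_of_le hjle with hjj | hjj
      · -- same slot
        subst hjj
        left
        have hsucc := stS_succ σ j (m := m)
        have hll := lenB_le m (pf σ j)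
        have hlen2 : lenB m (pf σ j) = 2 := by omega
        have hb : pf σ j < m := by
          by_contra h
          have : lenB m (pf σ j) = 1 := if_neg h
          omega
        have hpe : p = stS m σ j := by omega
        have hqe : q = stS m σ j + 1 := by omega
        rw [hW, Finset.mem_image]
        refine ⟨j, ?_, by rw [hpe, hqe]⟩
        rw [memB]
        refine ⟨hjM, hb, ?_⟩
        apply (desc_internal σ ε hr hjM hb).mp
        rw [hpe, hqe] at hinv'
        exact hinv'
      · -- different slots
        right
        rw [memC]
        have hbb : pf σ j' < pf σ j := by
          have hne : pf σ j ≠ pf σ j' := by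
            intro h
            have := pf_inj σ (show j < m + r by omega) (show j' < m + r by omega) h
            omega
          clear hinv
          omega
        exact ⟨j, j', ⟨hjM, hjM', hjj, hbb⟩, hj1, hj2, hj1', hj2'⟩
    · rintro (hw | hc)
      · rw [hW, Finset.mem_image] at hw
        obtain ⟨j, hjB, hxj⟩ := hw
        rw [memB] at hjB
        obtain ⟨hjM, hb, hbit⟩ := hjB
        have hpe : stS m σ j = p := congrArg Prod.fst hxj
        have hqe : stS m σ j + 1 = q := congrArg Prod.snd hxj
        have hsucc := stS_succ σ j (m := m)
        have hlen2 : lenB m (pf σ j) = 2 := if_pos hb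
        have hle : stS m σ (j + 1) ≤ stS m σ (m + r) := stS_mono σ (by omega)
        have hinv := (desc_internal σ ε hr hjM hb).mpr hbit
        refine ⟨⟨by omega, by omega⟩, by omega, ?_⟩
        rw [← hpe, ← hqe]
        exact hinv
      · rw [memC] at hc
        obtain ⟨j, j', ⟨h1, h2, h3, h4⟩, h5, h6, h7, h8⟩ := hc
        have h5' : stS m σ j ≤ p := h5
        have h6' : p < stS m σ (j + 1) := h6
        have h7' : stS m σ j' ≤ q := h7
        have h8' : q < stS m σ (j' + 1) := h8
        have hvp := pf_PhiP_slot σ ε hr h1 h5' h6'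
        have hvq := pf_PhiP_slot σ ε hr h2 h7' h8'
        have hmono : stS m σ (j + 1) ≤ stS m σ j' := stS_mono σ (by omega)
        have hle : stS m σ (j' + 1) ≤ stS m σ (m + r) := stS_mono σ (by omega)
        refine ⟨⟨by omega, by omega⟩, by omega, by omega⟩
  have hdisjWC : Disjoint W C := by
    rw [Finset.disjoint_left]
    intro x hxW hxC
    rw [hW, Finset.mem_image] at hxW
    obtain ⟨j, hjB, hxj⟩ := hxW
    rw [memB] at hjB
    obtain ⟨hjM, hb, hbit⟩ := hjB
    rw [memC] at hxC
    obtain ⟨k, k', ⟨g1, g2, g3, g4⟩, g5, g6, g7, g8⟩ := hxC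
    have hpe : stS m σ j = x.1 := congrArg Prod.fst hxj
    have hqe : stS m σ j + 1 = x.2 := congrArg Prod.snd hxj
    have hsucc := stS_succ σ j (m := m)
    have hlen2 : lenB m (pf σ j) = 2 := if_pos hb
    have hk : k = j := slot_unique σ g5 g6 (by omega) (by omega)
    have hk' : k' = j := slot_unique σ g7 g8 (by omega) (by omega)
    omega
  have hcardW : W.card = wtE ε := by
    rw [hW, Finset.card_image_of_injOn]
    · rw [hB]
      exact card_B_eq_wt σ ε hr
    · intro a _ b _ hab
      have : stS m σ a = stS m σ b := congrArg Prod.fst hab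
      exact stS_inj σ this
  have hcardC : Even C.card := by
    rw [hC, Finset.card_biUnion]
    · apply even_finset_sum
      intro q hq
      rw [hP, Finset.mem_filter, Finset.mem_product, Finset.mem_range, Finset.mem_range] at hq
      rw [Finset.card_product, Nat.card_Ico, Nat.card_Ico, stS_succ, stS_succ]
      have hne : pf σ q.1 ≠ pf σ q.2 := by
        intro h
        have := pf_inj σ (show q.1 < m + r by omega) (show q.2 < m + r by omega) h
        omega
      have hl1 := pf_lt σ (show q.1 < m + r from hq.1.1)
      have hl2 := pf_lt σ (show q.2 < m + r from hq.1.2)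
      have : lenB m (pf σ q.1) = 2 ∨ lenB m (pf σ q.2) = 2 := by
        by_contra h
        push_neg at h
        have e1 : ¬ pf σ q.1 < m := by
          intro hh; exact h.1 (if_pos hh)
        have e2 : ¬ pf σ q.2 < m := by
          intro hh; exact h.2 (if_pos hh)
        omega
      have p1 := lenB_pos m (pf σ q.1)
      have p2 := lenB_pos m (pf σ q.2)
      have l1 := lenB_le m (pf σ q.1)
      have l2 := lenB_le m (pf σ q.2)
      rcases this with h | h <;>
        · rw [Nat.even_mul]
          simp only [Nat.add_sub_cancel_left]
          first
          | (left; rw [h]; exact even_two)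
          | (right; rw [h]; exact even_two)
          | omega
    · intro a ha b hb hab
      rw [Function.onFun, Finset.disjoint_left]
      intro x hxa hxb
      rw [Finset.mem_coe, hP, Finset.mem_filter, Finset.mem_product, Finset.mem_range, Finset.mem_range] at ha hb
      rw [Finset.mem_product, Finset.mem_Ico, Finset.mem_Ico] at hxa hxb
      have e1 : a.1 = b.1 := slot_unique σ hxa.1.1 hxa.1.2 hxb.1.1 hxb.1.2
      have e2 : a.2 = b.2 := slot_unique σ hxa.2.1 hxa.2.2 hxb.2.1 hxb.2.2
      exact hab (Prod.ext e1 e2)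
  refine ⟨C.card, hcardC, ?_⟩
  rw [invN, hIWC, Finset.card_union_of_disjoint hdisjWC, hcardW]

lemma posf_eq_pf_inv {M : ℕ} (τ : Equiv.Perm (Fin M)) (x : ℕ) : posf τ x = pf τ⁻¹ x := by
  unfold posf pf
  split_ifs with h
  · rfl
  · rfl

lemma posf_card (τ : Equiv.Perm (Fin n)) {b : ℕ} (hb : b < n) :
    posf τ b = ((Finset.range n).filter (fun x => posf τ x < posf τ b)).card := by
  have : ((Finset.range n).filter (fun x => posf τ x < posf τ b)).card
      = ((Finset.range n).filter (fun y => y < posf τ b)).card := by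
    have := card_filter_perm τ⁻¹ (fun y => y < posf τ b)
    simp only [← posf_eq_pf_inv] at this
    exact this
  rw [this]
  have hlt : posf τ b ≤ n := (posf_lt τ hb).le
  have : (Finset.range n).filter (fun y => y < posf τ b) = Finset.range (posf τ b) := by
    ext y
    simp only [Finset.mem_filter, Finset.mem_range]
    omega
  rw [this, Finset.card_range]

lemma perm_eq_of_posf_eq {M : ℕ} {σ σ' : Equiv.Perm (Fin M)}
    (h : ∀ b < M, posf σ b = posf σ' b) : σ = σ' := by
  have hsymm : σ.symm = σ'.symm := by
    apply Equiv.ext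
    intro v
    apply Fin.ext
    have := h v v.isLt
    rw [posf_eq σ v.isLt, posf_eq σ' v.isLt] at this
    simpa using this
  have := congrArg Equiv.symm hsymm
  simpa using this

lemma posf_eq_of_orders {M : ℕ} (σ σ' : Equiv.Perm (Fin M))
    (h : ∀ b < M, ∀ b' < M, (posf σ b < posf σ b' ↔ posf σ' b < posf σ' b')) :
    ∀ b < M, posf σ b = posf σ' b := by
  intro b hb
  rw [posf_card σ hb, posf_card σ' hb]
  congr 1
  apply Finset.filter_congr
  intro x hx
  exact h x (Finset.mem_range.mp hx) b hb

lemma PhiP_inj (hr : r ≤ 1) {σ' : Equiv.Perm (Fin (m + r))} {ε' : Fin m → Bool}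
    (h : PhiP σ ε hr = PhiP σ' ε' hr) : σ = σ' ∧ ε = ε' := by
  have hiota : ∀ v < 2 * m + r, iotaF σ ε v = iotaF σ' ε' v := by
    intro v hv
    rw [← posf_PhiP σ ε hr hv, ← posf_PhiP σ' ε' hr hv, h]
  -- the start positions agree
  have hstart : ∀ b < m + r, stS m σ (posf σ b) = stS m σ' (posf σ' b) := by
    intro b hb
    by_cases hbm : b < m
    · have h0 := hiota (2 * b) (by omega)
      have h1 := hiota (2 * b + 1) (by omega)
      have d0 : (2 * b) / 2 = b := by omega
      have d1 : (2 * b + 1) / 2 = b := by omega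
      rw [iotaF_val σ ε (by omega), iotaF_val σ' ε' (by omega), d0] at h0
      rw [iotaF_val σ ε (by omega), iotaF_val σ' ε' (by omega), d1] at h1
      have o := ofsE_low ε hbm
      have o' := ofsE_low ε' hbm
      rw [o.1, o'.1] at h0
      rw [o.2, o'.2] at h1
      cases hε : ε ⟨b, hbm⟩ <;> cases hε' : ε' ⟨b, hbm⟩ <;>
        rw [hε, hε'] at h0 h1 <;> simp at h0 h1 <;> omega
    · have hv : 2 * b < 2 * m + r := by omega
      have h0 := hiota (2 * b) hv
      have d0 : (2 * b) / 2 = b := by omega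
      rw [iotaF_val σ ε hv, iotaF_val σ' ε' hv, d0,
        ofsE_high ε (by omega), ofsE_high ε' (by omega)] at h0
      omega
  have hposf : ∀ b < m + r, posf σ b = posf σ' b := by
    apply posf_eq_of_orders
    intro b hb b' hb'
    have k1 := hstart b hb
    have k2 := hstart b' hb'
    constructor
    · intro hlt
      have := stS_strict_mono σ hlt (m := m)
      rw [k1, k2] at this
      by_contra hc
      have := stS_mono σ' (show posf σ' b' ≤ posf σ' b by omega) (m := m)
      omega
    · intro hlt
      have := stS_strict_mono σ' hlt (m := m)
      rw [← k1, ← k2] at this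
      by_contra hc
      have := stS_mono σ (show posf σ b' ≤ posf σ b by omega) (m := m)
      omega
  have hσ : σ = σ' := perm_eq_of_posf_eq hposf
  subst hσ
  refine ⟨rfl, ?_⟩
  funext i
  have hbm : (i : ℕ) < m := i.isLt
  have h0 := hiota (2 * i) (by omega)
  have d0 : (2 * (i : ℕ)) / 2 = (i : ℕ) := by omega
  rw [iotaF_val σ ε (by omega), iotaF_val σ ε' (by omega), d0] at h0
  have o := ofsE_low ε hbm
  have o' := ofsE_low ε' hbm
  rw [o.1, o'.1] at h0
  have : (⟨(i : ℕ), hbm⟩ : Fin m) = i := by apply Fin.ext; rfl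
  rw [this] at h0
  cases hε : ε i <;> cases hε' : ε' i <;> rw [hε, hε'] at h0 <;> simp at h0 <;> omega

lemma badset_PhiP (hr : r ≤ 1) : badset (PhiP σ ε hr) = ∅ := by
  rw [Finset.eq_empty_iff_forall_notMem]
  intro i hi
  rw [mem_badset] at hi
  obtain ⟨him, hsep⟩ := hi
  have hm : i < m := by omega
  have hv0 : 2 * i < 2 * m + r := by omega
  have hv1 : 2 * i + 1 < 2 * m + r := by omega
  have h0 := posf_PhiP σ ε hr hv0
  have h1 := posf_PhiP σ ε hr hv1
  rw [iotaF_val σ ε hv0] at h0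
  rw [iotaF_val σ ε hv1] at h1
  have hd0 : (2 * i) / 2 = i := by omega
  have hd1 : (2 * i + 1) / 2 = i := by omega
  rw [hd0] at h0
  rw [hd1] at h1
  have o := ofsE_low ε hm
  rw [o.1] at h0
  rw [o.2] at h1
  unfold sep at hsep
  rw [h0, h1] at hsep
  cases hε : ε ⟨i, hm⟩ <;> rw [hε] at hsep <;> simp at hsep <;> omega

lemma sum_filter_perm {M : ℕ} (σ : Equiv.Perm (Fin M)) (f : ℕ → ℕ) (Q : ℕ → Prop)
    [DecidablePred Q] :
    ∑ j ∈ (Finset.range M).filter (fun j => Q (pf σ j)), f (pf σ j) =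
      ∑ b ∈ (Finset.range M).filter Q, f b := by
  rw [Finset.sum_filter, Finset.sum_filter]
  exact sum_range_perm σ (fun x => if Q x then f x else 0)

end PhiSec

section SurjSec

variable {m r : ℕ} (hr : r ≤ 1) (π : Equiv.Perm (Fin (2 * m + r)))

/-- Start position of the block of item `b` in `π`. -/
noncomputable def sNf (m : ℕ) (π : Equiv.Perm (Fin (2 * m + r))) (b : ℕ) : ℕ :=
  if b < m then min (posf π (2 * b)) (posf π (2 * b + 1)) else posf π (2 * m)

lemma PhiP_surj (hr : r ≤ 1) (hbad : badset π = ∅) :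
    ∃ (σ : Equiv.Perm (Fin (m + r))) (ε : Fin m → Bool), π = PhiP σ ε hr := by
  classical
  have hadj : ∀ i < m, posf π (2 * i) + 1 = posf π (2 * i + 1) ∨
      posf π (2 * i + 1) + 1 = posf π (2 * i) := by
    intro i hi
    have hni : i ∉ badset π := by rw [hbad]; exact Finset.notMem_empty i
    have hns : ¬ sep π (2 * i) := by
      intro hs
      exact hni (mem_badset.mpr ⟨by omega, hs⟩)
    unfold sep at hns
    by_cases h : posf π (2 * i) + 1 = posf π (2 * i + 1)
    · exact Or.inl h
    · right
      by_contra h'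
      exact hns ⟨h, h'⟩
  set sN : ℕ → ℕ := sNf m π with hsN
  have hsNlow : ∀ b, b < m → sN b = min (posf π (2 * b)) (posf π (2 * b + 1)) := by
    intro b hb; rw [hsN]; unfold sNf; rw [if_pos hb]
  have hsNhigh : ∀ b, ¬ b < m → sN b = posf π (2 * m) := by
    intro b hb; rw [hsN]; unfold sNf; rw [if_neg hb]
  -- block structure
  have hblock : ∀ b, b < m →
      ((pf π (sN b) = 2 * b ∧ pf π (sN b + 1) = 2 * b + 1 ∧
          posf π (2 * b) = sN b ∧ posf π (2 * b + 1) = sN b + 1) ∨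
        (pf π (sN b) = 2 * b + 1 ∧ pf π (sN b + 1) = 2 * b ∧
          posf π (2 * b + 1) = sN b ∧ posf π (2 * b) = sN b + 1)) ∧
        sN b + 1 < 2 * m + r := by
    intro b hb
    have h0 : 2 * b < 2 * m + r := by omega
    have h1 : 2 * b + 1 < 2 * m + r := by omega
    have hp0 := posf_lt π h0
    have hp1 := posf_lt π h1
    have hv0 := pf_posf π h0
    have hv1 := pf_posf π h1
    have hsb := hsNlow b hb
    rcases hadj b hb with h | h
    · have e0 : posf π (2 * b) = sN b := by omega
      have e1 : posf π (2 * b + 1) = sN b + 1 := by omega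
      refine ⟨Or.inl ⟨?_, ?_, e0, e1⟩, by omega⟩
      · rw [← e0]; exact hv0
      · rw [← e1]; exact hv1
    · have e0 : posf π (2 * b + 1) = sN b := by omega
      have e1 : posf π (2 * b) = sN b + 1 := by omega
      refine ⟨Or.inr ⟨?_, ?_, e0, e1⟩, by omega⟩
      · rw [← e0]; exact hv1
      · rw [← e1]; exact hv0
  have hdiv : ∀ b, b < m + r → pf π (sN b) / 2 = b ∧ sN b < 2 * m + r := by
    intro b hb
    by_cases hbm : b < m
    · obtain ⟨hc, hlt⟩ := hblock b hbm
      rcases hc with ⟨e, _, _, _⟩ | ⟨e, _, _, _⟩ <;> rw [e] <;> exact ⟨by omega, by omega⟩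
    · have hb' : b = m ∧ r = 1 := by omega
      have h2m : 2 * m < 2 * m + r := by omega
      have := pf_posf π h2m
      rw [hsNhigh b hbm]
      exact ⟨by rw [this]; omega, posf_lt π h2m⟩
  have hdiv1 : ∀ b, b < m → pf π (sN b + 1) / 2 = b := by
    intro b hb
    obtain ⟨hc, hlt⟩ := hblock b hb
    rcases hc with ⟨_, e, _, _⟩ | ⟨_, e, _, _⟩ <;> rw [e] <;> omega
  have hsinj : ∀ b, b < m + r → ∀ b', b' < m + r → sN b = sN b' → b = b' := by
    intro b hb b' hb' h
    have h1 := (hdiv b hb).1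
    have h2 := (hdiv b' hb').1
    rw [h] at h1
    omega
  have hcover : ∀ p, p < 2 * m + r →
      ∃ b, b < m + r ∧ (p = sN b ∨ (b < m ∧ p = sN b + 1)) := by
    intro p hp
    have hvN := pf_lt π hp
    have hppos := posf_pf π hp
    set v := pf π p with hv
    refine ⟨v / 2, by omega, ?_⟩
    by_cases hbm : v / 2 < m
    · obtain ⟨hc, hlt⟩ := hblock (v / 2) hbm
      rcases (show v = 2 * (v / 2) ∨ v = 2 * (v / 2) + 1 by omega) with he | he <;>
        rcases hc with ⟨_, _, e0, e1⟩ | ⟨_, _, e0, e1⟩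
      · left; rw [← e0, ← he, hv]; exact hppos.symm
      · right; exact ⟨hbm, by rw [← e1, ← he, hv]; exact hppos.symm⟩
      · right; exact ⟨hbm, by rw [← e1, ← he, hv]; exact hppos.symm⟩
      · left; rw [← e0, ← he, hv]; exact hppos.symm
    · have hveq : v = 2 * m := by omega
      left
      rw [hsNhigh (v / 2) hbm]
      rw [hveq] at hppos
      exact hppos.symm
  -- the partition identity
  have hstart : ∀ b, b < m + r →
      sN b = ∑ b' ∈ (Finset.range (m + r)).filter (fun b' => sN b' < sN b), lenB m b' := by
    intro b hb
    have hmemT : ∀ b', b' < m + r → ∀ x ∈ (if b' < m then ({sN b', sN b' + 1} : Finset ℕ)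
        else {sN b'}), pf π x / 2 = b' ∧ x < 2 * m + r := by
      intro b' hb' x hx
      by_cases hbm : b' < m
      · rw [if_pos hbm, Finset.mem_insert, Finset.mem_singleton] at hx
        rcases hx with h | h
        · subst h; exact ⟨(hdiv b' hb').1, (hdiv b' hb').2⟩
        · subst h; exact ⟨hdiv1 b' hbm, (hblock b' hbm).2⟩
      · rw [if_neg hbm, Finset.mem_singleton] at hx
        subst hx; exact ⟨(hdiv b' hb').1, (hdiv b' hb').2⟩
    have hTcard : ∀ b', b' < m + r → (if b' < m then ({sN b', sN b' + 1} : Finset ℕ)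
        else {sN b'}).card = lenB m b' := by
      intro b' hb'
      by_cases hbm : b' < m
      · rw [if_pos hbm, Finset.card_insert_of_notMem (by simp), Finset.card_singleton]
        unfold lenB; rw [if_pos hbm]
      · rw [if_neg hbm, Finset.card_singleton]
        unfold lenB; rw [if_neg hbm]
    have hset : Finset.range (sN b) =
        ((Finset.range (m + r)).filter (fun b' => sN b' < sN b)).biUnion
          (fun b' => if b' < m then ({sN b', sN b' + 1} : Finset ℕ) else {sN b'}) := by
      ext p
      rw [Finset.mem_range, Finset.mem_biUnion]
      constructor
      · intro hp
        have hpN : p < 2 * m + r := by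
          have := (hdiv b hb).2
          omega
        obtain ⟨b', hb', hc⟩ := hcover p hpN
        refine ⟨b', ?_, ?_⟩
        · rw [Finset.mem_filter, Finset.mem_range]
          rcases hc with h | ⟨hbm, h⟩ <;> exact ⟨hb', by omega⟩
        · rcases hc with h | ⟨hbm, h⟩
          · by_cases hbm : b' < m
            · rw [if_pos hbm]; simp [h]
            · rw [if_neg hbm]; simp [h]
          · rw [if_pos hbm]; simp [h]
      · rintro ⟨b', hb'f, hx⟩
        rw [Finset.mem_filter, Finset.mem_range] at hb'f
        obtain ⟨hb', hlt⟩ := hb'f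
        by_cases hbm : b' < m
        · rw [if_pos hbm, Finset.mem_insert, Finset.mem_singleton] at hx
          rcases hx with h | h
          · omega
          · subst h
            by_contra hcon
            have hpe : sN b' + 1 = sN b := by omega
            have h1 := hdiv1 b' hbm
            have h2 := (hdiv b hb).1
            rw [hpe] at h1
            have hbb : b' = b := by omega
            subst hbb
            omega
        · rw [if_neg hbm, Finset.mem_singleton] at hx
          omega
    have hdisjT : ∀ x ∈ (Finset.range (m + r)).filter (fun b' => sN b' < sN b),
        ∀ y ∈ (Finset.range (m + r)).filter (fun b' => sN b' < sN b), x ≠ y →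
        Disjoint (if x < m then ({sN x, sN x + 1} : Finset ℕ) else {sN x})
          (if y < m then ({sN y, sN y + 1} : Finset ℕ) else {sN y}) := by
      intro x hxf y hyf hxy
      rw [Finset.mem_filter, Finset.mem_range] at hxf hyf
      rw [Finset.disjoint_left]
      intro a hax hay
      have h1 := hmemT x hxf.1 a hax
      have h2 := hmemT y hyf.1 a hay
      omega
    have hcc := congrArg Finset.card hset
    rw [Finset.card_range, Finset.card_biUnion (fun x hx y hy hxy => hdisjT x hx y hy hxy)] at hcc
    refine hcc.trans ?_
    apply Finset.sum_congr rfl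
    intro b' hb'
    rw [Finset.mem_filter, Finset.mem_range] at hb'
    exact hTcard b' hb'.1
  -- sort the starts
  set sF : Fin (m + r) → ℕ := fun b => sN (b : ℕ) with hsF
  have hsFinj : Function.Injective sF := by
    intro a b h
    apply Fin.ext
    exact hsinj _ a.isLt _ b.isLt h
  set σ : Equiv.Perm (Fin (m + r)) := Tuple.sort sF with hσ
  have hsm : StrictMono (sF ∘ σ) := by
    apply Monotone.strictMono_of_injective
    · exact Tuple.monotone_sort sF
    · exact hsFinj.comp σ.injective
  have hpfval : ∀ j, j < m + r → ∀ (hj : j < m + r), pf σ j = (σ ⟨j, hj⟩ : ℕ) := by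
    intro j _ hj
    exact pf_eq σ hj
  have hstS : ∀ j, j < m + r → stS m σ j = sN (pf σ j) := by
    intro j hj
    have hpl : pf σ j < m + r := pf_lt σ hj
    rw [hstart (pf σ j) hpl]
    rw [← sum_filter_perm σ (lenB m) (fun b' => sN b' < sN (pf σ j))]
    have hfe : (Finset.range (m + r)).filter (fun j' => sN (pf σ j') < sN (pf σ j)) =
        Finset.range j := by
      ext j'
      rw [Finset.mem_filter, Finset.mem_range, Finset.mem_range]
      constructor
      · rintro ⟨hj', hlt⟩
        by_contra hcon
        have hje : j ≤ j' := by omega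
        rcases Nat.eq_or_lt_of_le hje with he | hlt2
        · subst he; omega
        · have := hsm (show (⟨j, hj⟩ : Fin (m + r)) < ⟨j', hj'⟩ from hlt2)
          simp only [Function.comp_apply, hsF] at this
          rw [pf_eq σ hj, pf_eq σ hj'] at hlt
          omega
      · intro hlt
        have hj' : j' < m + r := by omega
        refine ⟨hj', ?_⟩
        have := hsm (show (⟨j', hj'⟩ : Fin (m + r)) < ⟨j, hj⟩ from hlt)
        simp only [Function.comp_apply, hsF] at this
        rw [pf_eq σ hj, pf_eq σ hj']
        omega
    rw [hfe]
    rfl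
  -- the sign vector
  set εf : Fin m → Bool := fun i => decide (posf π (2 * (i : ℕ) + 1) < posf π (2 * (i : ℕ)))
    with hεf
  refine ⟨σ, εf, ?_⟩
  have hiota : ∀ v, v < 2 * m + r → posf π v = iotaF σ εf v := by
    intro v hv
    obtain ⟨b, hbv⟩ : ∃ b, v / 2 = b := ⟨v / 2, rfl⟩
    have hb : v / 2 < m + r := by omega
    have hjM : posf σ (v / 2) < m + r := posf_lt σ hb
    have hpfj : pf σ (posf σ (v / 2)) = v / 2 := pf_posf σ hb
    have hst := hstS (posf σ (v / 2)) hjM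
    rw [hpfj] at hst
    rw [iotaF_val σ εf hv, hst]
    rw [hbv] at hb hjM hpfj hst ⊢
    by_cases hbm : b < m
    · have o := ofsE_low εf hbm
      obtain ⟨hc, hlt⟩ := hblock b hbm
      have hεval : (εf ⟨b, hbm⟩ = true) ↔
          posf π (2 * b + 1) < posf π (2 * b) := by
        rw [hεf]; simp
      rcases (show v = 2 * b ∨ v = 2 * b + 1 by omega) with he | he
      · subst he
        rw [o.1]
        rcases hc with ⟨_, _, e0, e1⟩ | ⟨_, _, e0, e1⟩
        · rw [if_neg (by rw [hεval]; omega)]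
          omega
        · rw [if_pos (hεval.mpr (by omega))]
          omega
      · subst he
        rw [o.2]
        rcases hc with ⟨_, _, e0, e1⟩ | ⟨_, _, e0, e1⟩
        · rw [if_neg (by rw [hεval]; omega)]
          omega
        · rw [if_pos (hεval.mpr (by omega))]
          omega
    · have hveq : v = 2 * m := by omega
      rw [ofsE_high εf (by omega), Nat.add_zero, hsNhigh b hbm, hveq]
  have hsymm : π.symm = (PhiP σ εf hr).symm := by
    apply Equiv.ext
    intro x
    apply Fin.ext
    have h1 : (π.symm x : ℕ) = posf π (x : ℕ) := by rw [posf_eq π x.isLt]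
    have h2 : ((PhiP σ εf hr).symm x : ℕ) = posf (PhiP σ εf hr) (x : ℕ) := by
      rw [posf_eq _ x.isLt]
    rw [h1, h2, posf_PhiP σ εf hr x.isLt, hiota _ x.isLt]
  have := congrArg Equiv.symm hsymm
  simpa using this

end SurjSec

section Assemble

variable {m r : ℕ}

lemma sum_pow_wtE {R : Type*} [CommRing R] (t : R) (m : ℕ) :
    ∑ ε : Fin m → Bool, (-t) ^ wtE ε = (1 - t) ^ m := by
  have h1 : ∀ ε : Fin m → Bool, (-t) ^ wtE ε = ∏ i : Fin m, (if ε i then -t else 1) := by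
    intro ε
    rw [Finset.prod_ite, Finset.prod_const, Finset.prod_const_one, mul_one, wtE]
  rw [Finset.sum_congr rfl (fun ε _ => h1 ε)]
  rw [← Fintype.piFinset_univ]
  have hprod := Finset.prod_univ_sum (fun _ : Fin m => (Finset.univ : Finset Bool))
    (fun _ b => if b then -t else 1)
  rw [← hprod]
  have h2 : ∀ i : Fin m, ∑ b ∈ (Finset.univ : Finset Bool), (if b then -t else 1) = 1 - t := by
    intro i
    rw [Fintype.sum_bool]
    simp only [if_true, Bool.false_eq_true, if_false]
    ring
  rw [Finset.prod_congr rfl (fun i _ => h2 i), Finset.prod_const, Finset.card_univ,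
    Fintype.card_fin]

lemma sum_fixed (hr : r ≤ 1) {R : Type*} [CommRing R] (t : R) :
    ∑ π ∈ Finset.univ.filter (fun π : Equiv.Perm (Fin (2 * m + r)) => badset π = ∅),
      t ^ desN π * (-1 : R) ^ invN π = (1 - t) ^ m * eulerPoly R (m + r) t := by
  classical
  have hsum : ∑ p ∈ (Finset.univ : Finset (Equiv.Perm (Fin (m + r)) × (Fin m → Bool))),
      t ^ desN p.1 * (-t) ^ wtE p.2
      = ∑ π ∈ Finset.univ.filter (fun π : Equiv.Perm (Fin (2 * m + r)) => badset π = ∅),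
        t ^ desN π * (-1 : R) ^ invN π := by
    apply Finset.sum_bij (i := fun p _ => PhiP p.1 p.2 hr)
    · intro p _
      rw [Finset.mem_filter]
      exact ⟨Finset.mem_univ _, badset_PhiP p.1 p.2 hr⟩
    · intro p _ q _ h
      obtain ⟨h1, h2⟩ := PhiP_inj p.1 p.2 hr h
      exact Prod.ext h1 h2
    · intro π hπ
      rw [Finset.mem_filter] at hπ
      obtain ⟨σ, ε, hσε⟩ := PhiP_surj π hr hπ.2
      exact ⟨(σ, ε), Finset.mem_univ _, hσε.symm⟩
    · intro p _
      obtain ⟨c, hc, hinv⟩ := invN_PhiP p.1 p.2 hr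
      rw [desN_PhiP p.1 p.2 hr, hinv, pow_add, pow_add, hc.neg_one_pow, mul_one, neg_pow]
      ring
  rw [← hsum, Fintype.sum_prod_type]
  have hsplit : ∀ x : Equiv.Perm (Fin (m + r)),
      ∑ y : Fin m → Bool, t ^ desN (x, y).1 * (-t) ^ wtE (x, y).2 =
        t ^ desN x * ∑ y : Fin m → Bool, (-t) ^ wtE y := by
    intro x
    rw [Finset.mul_sum]
  rw [Finset.sum_congr rfl (fun x _ => hsplit x), sum_pow_wtE, ← Finset.sum_mul, eulerPoly]
  ring

lemma main_general {R : Type*} [CommRing R] (t : R) (m r : ℕ) (hr : r ≤ 1) :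
    ∑ π : Equiv.Perm (Fin (2 * m + r)), t ^ desN π * (-1 : R) ^ invN π =
      (1 - t) ^ m * eulerPoly R (m + r) t := by
  classical
  rw [← Finset.sum_filter_add_sum_filter_not Finset.univ
    (fun π : Equiv.Perm (Fin (2 * m + r)) => badset π = ∅)
    (fun π => t ^ desN π * (-1 : R) ^ invN π)]
  have h0 : ∑ π ∈ Finset.univ.filter
      (fun π : Equiv.Perm (Fin (2 * m + r)) => ¬ badset π = ∅),
      t ^ desN π * (-1 : R) ^ invN π = 0 := by
    have hfeq : Finset.univ.filter
        (fun π : Equiv.Perm (Fin (2 * m + r)) => ¬ badset π = ∅) =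
        Finset.univ.filter (fun π : Equiv.Perm (Fin (2 * m + r)) => badset π ≠ ∅) :=
      Finset.filter_congr (fun _ _ => Iff.rfl)
    rw [hfeq]
    exact sum_bad_eq_zero t
  rw [h0, add_zero]
  exact sum_fixed hr t

end Assemble

end DFLaux

/-- sign-balance identity of Désarménien–Foata–Loday for the
(des, inv)-Eulerian polynomials. -/
theorem stmt3 {R : Type*} [CommRing R] (t : R) (n m : ℕ) (hn : 1 ≤ n) :
    (n = 2 * m →
      ∑ π : Equiv.Perm (Fin n), t ^ desN π * (-1 : R) ^ invN π =
        (1 - t) ^ m * eulerPoly R m t) ∧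
    (n = 2 * m + 1 →
      ∑ π : Equiv.Perm (Fin n), t ^ desN π * (-1 : R) ^ invN π =
        (1 - t) ^ m * eulerPoly R (m + 1) t) := by
  constructor
  · intro h
    subst h
    exact main_general t m 0 (by omega)
  · intro h
    subst h
    exact main_general t m 1 (by omega)
end

section
/- The Eulerian polynomials satisfy the quadratic recurrence A_{n+1}(t) = (1+t) A_n(t) + t ∑_{k=1}^{n-1} C(n,k) A_{n-k}(t) A_k(t) for all n ≥ 1. -/
open Finset

/-!
Inserting the letter `n` into one of the `n + 1` slots of `τ ∈ S_n` creates no new descent when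
the slot follows a descent or ends the word (`des τ + 1` slots) and exactly one new descent
otherwise, so `A_{n+1} = (1 + n t) A_n + t (1 - t) A_n'`. Together with `A_0 = 1` this differential
recurrence gives `A_{n+1} = (1 - t) A_n + t B_n`, where `B_n = ∑_{i+j=n} C(n,i) A_i A_j`, by
induction on `n`: the Leibniz rule `B_{n+1} = ∑_{i+j=n} C(n,i) (A_{i+1} A_j + A_i A_{j+1})` shows
`B_{n+1} = (2 + n t) B_n + t (1 - t) B_n'`. Separating the terms `i = 0` and `j = 0` of `B_n`
gives the statement.
-/

namespace Eulerian

/-- The descent positions `i < m` of the word `g 0, g 1, …, g m`. -/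
def descents (g : ℕ → ℕ) (m : ℕ) : Finset ℕ := {i ∈ range m | g (i + 1) < g i}

lemma card_descents_succ (g : ℕ → ℕ) (m : ℕ) :
    #(descents g (m + 1)) = #(descents g m) + if g (m + 1) < g m then 1 else 0 := by
  simp only [descents, range_add_one, filter_insert]
  split_ifs
  · exact card_insert_of_notMem (by simp)
  · rfl

lemma descents_congr {f g : ℕ → ℕ} {m : ℕ} (h : ∀ i ≤ m, f i = g i) :
    descents f m = descents g m :=
  filter_congr fun i hi => by
    rw [mem_range] at hi
    rw [h i hi.le, h (i + 1) hi]

def insertAt (p v : ℕ) (g : ℕ → ℕ) (j : ℕ) : ℕ :=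
  if j < p then g j else if j = p then v else g (j - 1)

variable {g : ℕ → ℕ} {p v : ℕ}

lemma card_descents_insertAt_self (hv : ∀ i < p, g i < v) :
    #(descents (insertAt p v g) p) = #(descents g (p - 1)) := by
  cases p with
  | zero => rfl
  | succ q =>
    have hq := hv q q.lt_add_one
    have hbelow : descents (insertAt (q + 1) v g) q = descents g q :=
      descents_congr fun i hi => if_pos (by omega)
    rw [card_descents_succ, hbelow]
    simp [insertAt, hq.not_gt]

lemma card_descents_insertAt_succ {m : ℕ} (hpm : p ≤ m) (hv : ∀ i ≤ m, g i < v) :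
    #(descents (insertAt p v g) (m + 1)) + #(descents g p) =
      #(descents g m) + #(descents g (p - 1)) + 1 := by
  induction m, hpm using Nat.le_induction with
  | base =>
    rw [card_descents_succ, card_descents_insertAt_self fun i hi => hv i hi.le]
    simp [insertAt, hv p le_rfl]
    omega
  | succ m hpm ih =>
    rw [card_descents_succ, card_descents_succ g m]
    simp only [insertAt, if_neg (show ¬ m + 1 + 1 < p by omega), if_neg (show ¬ m + 1 < p by omega),
      if_neg (show m + 1 + 1 ≠ p by omega), if_neg (show m + 1 ≠ p by omega)]
    have := ih fun i hi => hv i (by omega)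
    simp only [Nat.add_sub_cancel]
    omega

/-- The positions `p ≤ m` where inserting a letter larger than `g 0, …, g (m - 1)` creates no
new descent: right after a descent, or at the end. -/
def descentSlots (g : ℕ → ℕ) (m : ℕ) : Finset ℕ :=
  insert m ((descents g (m - 1)).image (· + 1))

lemma card_descentSlots (g : ℕ → ℕ) (m : ℕ) :
    #(descentSlots g m) = #(descents g (m - 1)) + 1 := by
  rw [descentSlots, card_insert_of_notMem, card_image_of_injective _ (add_left_injective 1)]
  simp only [mem_image, descents, mem_filter, mem_range]
  omega

lemma descentSlots_subset_range (g : ℕ → ℕ) (m : ℕ) : descentSlots g m ⊆ range (m + 1) := by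
  intro i
  simp only [descentSlots, mem_insert, mem_image, descents, mem_filter, mem_range]
  omega

lemma card_descents_eq_of_lt {m : ℕ} (hpm : p < m) :
    #(descents g p) = #(descents g (p - 1)) + if p ∈ descentSlots g m then 1 else 0 := by
  cases p with
  | zero => simp [descents, descentSlots, hpm.ne]
  | succ q =>
    rw [card_descents_succ]
    simp [descentSlots, descents, hpm.ne, show q < m - 1 by omega]

theorem card_descents_insertAt {m : ℕ} (hpm : p ≤ m) (hv : ∀ i < m, g i < v) :
    #(descents (insertAt p v g) m) + (if p ∈ descentSlots g m then 1 else 0) =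
      #(descents g (m - 1)) + 1 := by
  obtain rfl | hpm := hpm.eq_or_lt
  · simp [card_descents_insertAt_self hv, descentSlots]
  · obtain ⟨m, rfl⟩ := Nat.exists_eq_add_of_lt hpm
    have := card_descents_insertAt_succ (m := p + m) le_self_add fun i hi => hv i (by omega)
    rw [card_descents_eq_of_lt hpm] at this
    simp only [Nat.add_sub_cancel]
    omega

open Equiv

variable {n : ℕ}

lemma pf_lt (τ : Perm (Fin n)) {i : ℕ} (hi : i < n) : pf τ i < n := by
  rw [pf, dif_pos hi]
  exact Fin.isLt _

/-- Insert the letter `n` at position `p` into the one-line notation of `τ ∈ S_n`. -/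
def insertMax (p : Fin (n + 1)) (τ : Perm (Fin n)) : Perm (Fin (n + 1)) :=
  (finSuccEquiv' p).trans ((optionCongr τ).trans (finSuccEquiv' (Fin.last n)).symm)

@[simp]
lemma insertMax_apply_self (p : Fin (n + 1)) (τ : Perm (Fin n)) :
    insertMax p τ p = Fin.last n := by
  simp [insertMax]

@[simp]
lemma insertMax_apply_succAbove (p : Fin (n + 1)) (τ : Perm (Fin n)) (j : Fin n) :
    insertMax p τ (p.succAbove j) = (τ j).castSucc := by
  simp [insertMax]

lemma pf_insertMax (p : Fin (n + 1)) (τ : Perm (Fin n)) {j : ℕ} (hj : j ≤ n) :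
    pf (insertMax p τ) j = insertAt p n (pf τ) j := by
  rw [pf, dif_pos (Nat.lt_succ_of_le hj)]
  obtain h | ⟨k, h⟩ := p.eq_self_or_eq_succAbove ⟨j, Nat.lt_succ_of_le hj⟩
  · rw [h, insertMax_apply_self]
    simp [insertAt, ← h]
  · rw [h, insertMax_apply_succAbove, Fin.val_castSucc]
    have hjk := congrArg Fin.val h
    by_cases hk : k.castSucc < p
    · rw [Fin.succAbove_of_castSucc_lt p k hk] at hjk
      rw [Fin.lt_def, Fin.val_castSucc] at hk
      simp only [Fin.val_castSucc] at hjk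
      subst hjk
      simp [insertAt, pf, hk]
    · rw [Fin.succAbove_of_le_castSucc p k (not_lt.mp hk)] at hjk
      rw [Fin.lt_def, Fin.val_castSucc] at hk
      simp only [Fin.val_succ] at hjk
      subst hjk
      simp [insertAt, pf, show ¬ (k : ℕ) + 1 < p by omega, show (k : ℕ) + 1 ≠ p by omega]

lemma desN_insertMax (p : Fin (n + 1)) (τ : Perm (Fin n)) :
    desN (insertMax p τ) + (if (p : ℕ) ∈ descentSlots (pf τ) n then 1 else 0) = desN τ + 1 := by
  have h : desN (insertMax p τ) = #(descents (insertAt p n (pf τ)) n) :=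
    congrArg card (descents_congr fun j hj => pf_insertMax p τ hj)
  rw [h]
  exact card_descents_insertAt (Nat.lt_succ_iff.mp p.isLt) fun i => pf_lt τ

lemma insertMax_injective :
    Function.Injective fun x : Fin (n + 1) × Perm (Fin n) => insertMax x.1 x.2 := by
  rintro ⟨p, τ⟩ ⟨q, σ⟩ h
  simp only at h
  obtain rfl : p = q := by
    by_contra hpq
    obtain ⟨j, rfl⟩ := Fin.exists_succAbove_eq hpq
    have := insertMax_apply_self (q.succAbove j) τ
    rw [h, insertMax_apply_succAbove] at this
    exact Fin.castSucc_ne_last _ this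
  refine Prod.ext rfl (Equiv.ext fun j => Fin.castSucc_injective _ ?_)
  rw [← insertMax_apply_succAbove, h, insertMax_apply_succAbove]

lemma insertMax_bijective :
    Function.Bijective fun x : Fin (n + 1) × Perm (Fin n) => insertMax x.1 x.2 := by
  rw [Fintype.bijective_iff_injective_and_card]
  refine ⟨insertMax_injective, ?_⟩
  simp [Fintype.card_perm, Nat.factorial_succ]

lemma sum_pow_desN_insertMax {R : Type*} [CommRing R] (t : R) (τ : Perm (Fin n)) :
    ∑ p : Fin (n + 1), t ^ desN (insertMax p τ) =
      ((desN τ + 1 : ℕ) : R) * t ^ desN τ + ((n - desN τ : ℕ) : R) * t ^ (desN τ + 1) := by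
  set S := descentSlots (pf τ) n
  have hS : #S = desN τ + 1 := card_descentSlots (pf τ) n
  have hpow (p : Fin (n + 1)) :
      t ^ desN (insertMax p τ) = if (p : ℕ) ∈ S then t ^ desN τ else t ^ (desN τ + 1) := by
    have := desN_insertMax p τ
    split_ifs at this ⊢ <;> exact congrArg _ (by omega)
  have hcompl : #{p ∈ range (n + 1) | p ∉ S} = n - desN τ := by
    have := card_filter_add_card_filter_not (s := range (n + 1)) (· ∈ S)
    rw [filter_mem_eq_inter, inter_eq_right.mpr (descentSlots_subset_range _ _), card_range] at this
    change #S + _ = _ at this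
    omega
  rw [Fintype.sum_congr _ _ hpow, Fin.sum_univ_eq_sum_range (fun p => if p ∈ S then _ else _),
    sum_ite, filter_mem_eq_inter, inter_eq_right.mpr (descentSlots_subset_range _ _), sum_const,
    sum_const, hS, hcompl, nsmul_eq_mul, nsmul_eq_mul]

lemma eulerPoly_succ_eq_sum_insertMax {R : Type*} [CommRing R] (t : R) :
    eulerPoly R (n + 1) t = ∑ τ : Perm (Fin n), ∑ p : Fin (n + 1), t ^ desN (insertMax p τ) := by
  rw [eulerPoly, ← Fintype.sum_bijective _ insertMax_bijective _ _ fun _ => rfl,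
    Fintype.sum_prod_type, sum_comm]

open Polynomial

lemma X_mul_derivative_X_pow {R : Type*} [CommRing R] (d : ℕ) :
    X * derivative (X ^ d : R[X]) = (d : R[X]) * X ^ d := by
  cases d with
  | zero => simp
  | succ d => rw [derivative_X_pow_succ, ← Nat.cast_succ, C_eq_natCast]; ring

theorem eulerPoly_X_succ (R : Type*) [CommRing R] (n : ℕ) :
    eulerPoly R[X] (n + 1) X =
      (1 + (n : R[X]) * X) * eulerPoly R[X] n X + X * (1 - X) * derivative (eulerPoly R[X] n X) := by
  rw [eulerPoly_succ_eq_sum_insertMax, eulerPoly, derivative_sum, mul_sum, mul_sum,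
    ← sum_add_distrib]
  refine sum_congr rfl fun τ _ => ?_
  have hd : desN τ ≤ n := (card_filter_le _ _).trans (by simp)
  rw [sum_pow_desN_insertMax, Nat.cast_sub hd,
    show X * (1 - X) * derivative (X ^ desN τ : R[X]) = (1 - X) * (X * derivative (X ^ desN τ))
      by ring, X_mul_derivative_X_pow]
  push_cast
  ring

section ODE

variable {R : Type*} [CommRing R] {A : ℕ → R[X]}

/-- `n!` times the `n`-th coefficient of the square of the exponential generating function
of `A`. -/
noncomputable def egfSq (A : ℕ → R[X]) (n : ℕ) : R[X] :=
  ∑ ij ∈ antidiagonal n, (n.choose ij.1 : R[X]) * (A ij.1 * A ij.2)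

lemma egfSq_succ
    (hA : ∀ n : ℕ, A (n + 1) = (1 + (n : R[X]) * X) * A n + X * (1 - X) * derivative (A n))
    (n : ℕ) :
    egfSq A (n + 1) = (2 + (n : R[X]) * X) * egfSq A n + X * (1 - X) * derivative (egfSq A n) := by
  rw [egfSq, sum_antidiagonal_choose_succ_mul (fun i j => A i * A j), egfSq, derivative_sum,
    mul_sum, mul_sum, ← sum_add_distrib, ← sum_add_distrib]
  refine sum_congr rfl fun ij hij => ?_
  rw [HasAntidiagonal.mem_antidiagonal] at hij
  rw [← Nat.choose_symm_of_eq_add hij.symm, hA, hA, derivative_mul, derivative_natCast,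
    derivative_mul, ← hij]
  push_cast
  ring

theorem quadratic_recurrence_of_derivative_recurrence
    (hA : ∀ n : ℕ, A (n + 1) = (1 + (n : R[X]) * X) * A n + X * (1 - X) * derivative (A n))
    (h0 : A 0 = 1) (n : ℕ) :
    A (n + 1) = (1 - X) * A n + X * egfSq A n := by
  induction n with
  | zero => simp [hA 0, h0, egfSq]
  | succ n ih =>
    have hder := congrArg derivative ih
    rw [derivative_add, derivative_mul, derivative_mul, derivative_sub, derivative_one,
      derivative_X] at hder
    rw [egfSq_succ hA, hA (n + 1), hder]
    push_cast
    linear_combination (1 + ((n : R[X]) + 1) * X) * ih - (1 - X) * hA n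

end ODE

lemma eulerPoly_zero (R : Type*) [CommRing R] (t : R) : eulerPoly R 0 t = 1 := by
  simp [eulerPoly, desN]

lemma map_eulerPoly {R S : Type*} [CommRing R] [CommRing S] (f : R →+* S) (n : ℕ) (t : R) :
    f (eulerPoly R n t) = eulerPoly S n (f t) := by
  simp [eulerPoly]

lemma sum_antidiagonal_succ_eq_add_sum_Icc {M : Type*} [AddCommMonoid M] (f : ℕ → ℕ → M)
    (n : ℕ) :
    ∑ ij ∈ antidiagonal (n + 1), f ij.1 ij.2 =
      f 0 (n + 1) + f (n + 1) 0 + ∑ k ∈ Icc 1 n, f k (n + 1 - k) := by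
  rw [Nat.sum_antidiagonal_eq_sum_range_succ f, sum_range_succ', sum_range_succ,
    ← Ico_add_one_right_eq_Icc, sum_Ico_eq_sum_range]
  simp only [add_comm 1, Nat.add_sub_cancel, Nat.sub_self]
  abel

end Eulerian

/-- the quadratic recurrence for the Eulerian polynomials. -/
theorem stmt4 {R : Type*} [CommRing R] (t : R) (n : ℕ) (hn : 1 ≤ n) :
    eulerPoly R (n + 1) t =
      (1 + t) * eulerPoly R n t +
        t * ∑ k ∈ Icc 1 (n - 1), (n.choose k : R) * eulerPoly R (n - k) t * eulerPoly R k t := by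
  open Eulerian Polynomial in
  obtain ⟨m, rfl⟩ := Nat.exists_eq_add_of_le' hn
  have key := congrArg (evalRingHom t) <|
    quadratic_recurrence_of_derivative_recurrence (A := fun n => eulerPoly R[X] n X)
      (eulerPoly_X_succ R) (eulerPoly_zero R[X] X) (m + 1)
  simp only [map_add, map_mul, map_sub, map_one, egfSq, map_sum, map_natCast, map_eulerPoly,
    coe_evalRingHom, eval_X] at key
  have hsum : ∑ k ∈ Icc 1 m, ((m + 1).choose k : R) * eulerPoly R (m + 1 - k) t * eulerPoly R k t
      = ∑ k ∈ Icc 1 m, ((m + 1).choose k : R) * (eulerPoly R k t * eulerPoly R (m + 1 - k) t) :=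
    sum_congr rfl fun k _ => by ring
  rw [key, Nat.add_sub_cancel, hsum, sum_antidiagonal_succ_eq_add_sum_Icc
    (fun i j => ((m + 1).choose i : R) * (eulerPoly R i t * eulerPoly R j t))]
  simp only [eulerPoly_zero, Nat.choose_zero_right, Nat.choose_self, Nat.cast_one]
  ring
end
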